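/- arXiv:1301.6579 — 11 statements merged into one kernel-verified Lean document; each statement's English description precedes it below -/
import Mathlib

section
/- For nonnegative integers α, β, n, the alternating sum ∑_{k=0}^{n} (-1)^k C(n,k) (k+α)!/(k+β)! equals (α!/(β+n)!) · (β-α+n-1)(β-α+n-2)⋯(β-α), i.e. α!/(β+n)! times the falling factorial (β-α+n-1)_n. -/
open Finset Nat

lemma alt_sum_pascal (f : ℕ → ℚ) (n : ℕ) :
    ∑ k ∈ range (n + 2), (-1 : ℚ) ^ k * ((n+1).choose k : ℚ) * f k
    = ∑ k ∈ range (n + 1), (-1 : ℚ) ^ k * (n.choose k : ℚ) * f k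
      - ∑ k ∈ range (n + 1), (-1 : ℚ) ^ k * (n.choose k : ℚ) * f (k+1) := by
  rw [Finset.sum_range_succ' _ (n+1)]
  have h1 : ∑ k ∈ range (n+1), (-1:ℚ)^(k+1) * (((n+1).choose (k+1) : ℕ) : ℚ) * f (k+1)
      = ∑ k ∈ range (n+1), ((-1:ℚ)^(k+1) * ((n.choose (k+1) : ℕ) : ℚ) * f (k+1)
        - (-1:ℚ)^k * ((n.choose k : ℕ) : ℚ) * f (k+1)) := by
    apply Finset.sum_congr rfl
    intro k _
    rw [Nat.choose_succ_succ]
    push_cast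
    ring
  rw [h1, Finset.sum_sub_distrib]
  have h2 : ∑ k ∈ range (n+1), (-1:ℚ)^(k+1) * ((n.choose (k+1) : ℕ) : ℚ) * f (k+1)
      = ∑ k ∈ range (n+2), (-1:ℚ)^k * ((n.choose k : ℕ) : ℚ) * f k
        - (-1:ℚ)^0 * ((n.choose 0 : ℕ) : ℚ) * f 0 := by
    rw [Finset.sum_range_succ' (fun k => (-1:ℚ)^k * ((n.choose k : ℕ) : ℚ) * f k) (n+1)]
    ring
  rw [h2, Finset.sum_range_succ]
  simp [Nat.choose_succ_self]
  ring

lemma descP_succ_left_eval (m : ℕ) (x : ℚ) :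
    (descPochhammer ℚ (m+1)).eval x = x * (descPochhammer ℚ m).eval (x-1) := by
  rw [descPochhammer_succ_left]
  simp [Polynomial.eval_comp]

/-- For nonnegative integers α, β, n:
∑_{k=0}^{n} (-1)^k C(n,k) (k+α)!/(k+β)! = (α!/(β+n)!) · (β-α+n-1)_n
where (x)_n is the falling factorial. -/
theorem stmt0 (α β n : ℕ) :
    ∑ k ∈ range (n + 1),
      (-1 : ℚ) ^ k * (n.choose k : ℚ) * ((k + α)! : ℚ) / ((k + β)! : ℚ) =
    ((α ! : ℚ) / ((β + n)! : ℚ)) *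
      (((descPochhammer ℤ n).eval ((β : ℤ) - (α : ℤ) + (n : ℤ) - 1) : ℤ) : ℚ) := by
  induction n generalizing α β with
  | zero => simp
  | succ n ih =>
    have key : ∑ k ∈ range (n + 1 + 1),
        (-1 : ℚ) ^ k * ((n+1).choose k : ℚ) * (((k + α)! : ℚ) / ((k + β)! : ℚ))
      = ∑ k ∈ range (n + 1), (-1 : ℚ) ^ k * (n.choose k : ℚ) * (((k + α)! : ℚ) / ((k + β)! : ℚ))
        - ∑ k ∈ range (n + 1), (-1 : ℚ) ^ k * (n.choose k : ℚ) * (((k + 1 + α)! : ℚ) / ((k + 1 + β)! : ℚ)) := by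
      have := alt_sum_pascal (fun k => ((k + α)! : ℚ) / ((k + β)! : ℚ)) n
      exact this
    simp only [mul_div_assoc] at ih ⊢
    rw [key]
    have e1 : ∀ k, k + 1 + α = k + (α + 1) := by omega
    have e2 : ∀ k, k + 1 + β = k + (β + 1) := by omega
    simp only [e1, e2]
    rw [ih α β, ih (α+1) (β+1)]
    push_cast at *
    have hx : ((β:ℚ) + 1 - ((α:ℚ)+1) + n - 1) = (β:ℚ) - α + n - 1 := by ring
    have hx2 : ((β:ℚ) - (α:ℚ) + ((n:ℚ)+1) - 1) = (β:ℚ) - α + n := by ring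
    rw [hx, hx2, descP_succ_left_eval]
    have hx3 : ((β:ℚ) - α + n - 1) = (β:ℚ) - (α:ℚ) + (n:ℚ) - 1 := by ring
    set e : ℚ := (descPochhammer ℚ n).eval ((β:ℚ) - α + n - 1) with he
    have hf1 : ((β + (n+1))! : ℚ) = ((β + n + 1 : ℕ) : ℚ) * ((β + n)! : ℚ) := by
      have : β + (n+1) = (β + n) + 1 := by omega
      rw [this, Nat.factorial_succ]; push_cast; ring
    have hf2 : (((β+1) + n)! : ℚ) = ((β + n + 1 : ℕ) : ℚ) * ((β + n)! : ℚ) := by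
      have : (β+1) + n = (β + n) + 1 := by omega
      rw [this, Nat.factorial_succ]; push_cast; ring
    have hf3 : (((α+1))! : ℚ) = ((α + 1 : ℕ) : ℚ) * ((α)! : ℚ) := by
      rw [Nat.factorial_succ]; push_cast; ring
    rw [hf1, hf2, hf3]
    have hne : ((β + n)! : ℚ) ≠ 0 := by positivity
    have hne2 : ((β + n + 1 : ℕ) : ℚ) ≠ 0 := by positivity
    field_simp
    push_cast
    ring
end

section
/- If α < β are nonnegative integers and n is a nonnegative integer, then ∑_{k=0}^{n} (-1)^k C(n,k) / C(k+β, k+α) = ((β-α)/(β-α+n)) / C(β+n, α). -/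
/-!
With `c = β - α` and `j = k + α` one has `1 / C(j + c, j) = c! · j! / (j + c)!`, so the sum is
`(-1)^n` times the `n`-th forward difference at `α` of `j ↦ j! / (j + c)!`. One difference step
gives `Δ (j! / (j + c)!) = -c · j! / (j + c + 1)!`, hence the `n`-th difference is
`(-1)^n c (c + 1) ⋯ (c + n - 1) · α! / (α + c + n)!`, which rearranges to the right-hand side.
-/

open Finset Nat fwdDiff

theorem sum_range_neg_one_pow_mul_choose_mul {R : Type*} [CommRing R] (f : ℕ → R) (n y : ℕ) :
    ∑ k ∈ range (n + 1), (-1 : R) ^ k * n.choose k * f (y + k) = (-1) ^ n * (Δ_[1])^[n] f y := by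
  rw [fwdDiff_iter_eq_sum_shift, mul_sum]
  refine sum_congr rfl fun k hk => ?_
  have hsign : (-1 : R) ^ n = (-1) ^ k * (-1) ^ (n - k) := by
    rw [← pow_add, Nat.add_sub_cancel' (Nat.le_of_lt_succ (mem_range.mp hk))]
  rw [zsmul_eq_mul, hsign, smul_eq_mul, mul_one]
  push_cast
  have hsq : (-1 : R) ^ (n - k) * (-1) ^ (n - k) = 1 := by rw [← mul_pow]; simp
  linear_combination -(-1 : R) ^ k * n.choose k * f (y + k) * hsq

section FactorialQuot

variable (K : Type*) [Field K] [CharZero K]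

def factorialQuot (c j : ℕ) : K := (j ! : K) / (j + c)!

variable {K}

theorem fwdDiff_factorialQuot (c : ℕ) :
    Δ_[1] (factorialQuot K c) = (-(c : K)) • factorialQuot K (c + 1) := by
  ext j
  simp only [fwdDiff, factorialQuot, Pi.smul_apply, smul_eq_mul]
  rw [show j + 1 + c = j + c + 1 by omega, ← add_assoc, factorial_succ, factorial_succ (j + c)]
  have hfact : ((j + c)! : K) ≠ 0 := by exact_mod_cast (j + c).factorial_ne_zero
  have hsucc : ((j + c + 1 : ℕ) : K) ≠ 0 := Nat.cast_ne_zero.mpr (succ_ne_zero _)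
  push_cast at hsucc ⊢
  field_simp
  ring

theorem fwdDiff_iter_factorialQuot (c n : ℕ) :
    (Δ_[1])^[n] (factorialQuot K c) = ((-1) ^ n * c.ascFactorial n : K) • factorialQuot K (c + n) := by
  induction n with
  | zero => simp
  | succ n ih =>
    rw [Function.iterate_succ_apply', ih, fwdDiff_const_smul, fwdDiff_factorialQuot, smul_smul,
      ascFactorial_succ, ← add_assoc]
    push_cast
    ring_nf

theorem inv_cast_add_choose_eq_factorial_mul_factorialQuot (j c : ℕ) :
    (((j + c).choose j : ℕ) : K)⁻¹ = c ! * factorialQuot K c j := by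
  rw [cast_add_choose, factorialQuot, inv_div]
  ring

theorem sum_range_neg_one_pow_mul_choose_mul_factorialQuot (c n y : ℕ) :
    ∑ k ∈ range (n + 1), (-1 : K) ^ k * n.choose k * factorialQuot K c (y + k) =
      c.ascFactorial n * factorialQuot K (c + n) y := by
  rw [sum_range_neg_one_pow_mul_choose_mul, fwdDiff_iter_factorialQuot, Pi.smul_apply, smul_eq_mul,
    ← mul_assoc, ← mul_assoc, ← pow_add, Even.neg_one_pow ⟨n, rfl⟩, one_mul]

end FactorialQuot

/-- If α < β then ∑_{k=0}^{n} (-1)^k C(n,k) / C(k+β, k+α)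
    = ((β-α)/(β-α+n)) / C(β+n, α). -/
theorem stmt2 (α β n : ℕ) (h : α < β) :
    ∑ k ∈ range (n + 1),
      (-1 : ℚ) ^ k * (n.choose k : ℚ) / ((k + β).choose (k + α) : ℚ) =
    (((β : ℚ) - (α : ℚ)) / ((β : ℚ) - (α : ℚ) + (n : ℚ))) / ((β + n).choose α : ℚ) := by
  obtain ⟨m, rfl⟩ := Nat.exists_eq_add_of_lt h
  have hterm : ∀ k, ((k + (α + m + 1)).choose (k + α) : ℚ)⁻¹ =
      (m + 1)! * factorialQuot ℚ (m + 1) (α + k) := fun k => by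
    rw [← inv_cast_add_choose_eq_factorial_mul_factorialQuot, add_comm α k, add_assoc, add_assoc]
  simp_rw [div_eq_mul_inv _ ((_ : ℕ) : ℚ), hterm, mul_left_comm _ ((m + 1)! : ℚ), ← mul_sum,
    sum_range_neg_one_pow_mul_choose_mul_factorialQuot]
  have hasc : ((m + 1)! * (m + 1).ascFactorial n : ℚ) = (m + 1) * (m + n)! := by
    rw [factorial_succ, cast_mul, mul_assoc, ← cast_mul, factorial_mul_ascFactorial, cast_succ]
  have hdiff : ((α + m + 1 : ℕ) : ℚ) - α = m + 1 := by push_cast; ring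
  have hfact : ((m + n)! : ℚ) ≠ 0 := by positivity
  have hpos : (m + 1 + n : ℚ) ≠ 0 := by positivity
  rw [hdiff, show α + m + 1 + n = α + (m + n + 1) by omega, cast_add_choose, factorialQuot,
    show m + 1 + n = m + n + 1 by omega, factorial_succ (m + n)]
  field_simp
  push_cast
  linear_combination (m + n + 1 : ℚ) * hasc
end

section
/- With the same setting, for every integer k, P{S_n ≤ k} = 𝟙_{k≥0} + (-1)^k ∑_{ℓ=1}^{n} (-c)^ℓ C(n,ℓ) C(2Nℓ - 1, k+Nℓ). -/
/-! The step law is `δ₀ - c • L_N`, where `L_m` is the coefficient sequence of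
`(2 - T - T⁻¹) ^ m = (-1) ^ m T⁻ᵐ (1 - T) ^ (2m)`. Vandermonde's identity says
`L_a * L_b = L_(a+b)`, so the binomial theorem gives
`P{S_n = k} = ∑ ℓ, (-c) ^ ℓ C(n, ℓ) L_(Nℓ)(k)`. For `m > 0`, Pascal's rule writes `L_m(k)` as
the difference at `k` of `(-1) ^ k C(2m - 1, k + m)`, and `L_0 = δ₀` is the difference of
`𝟙_{k ≥ 0}`. Hence `P{S_n = k}` is the difference sequence of the claimed right-hand side,
which vanishes below `-Nn`, and the cumulative sum telescopes. -/

open Finset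

/-- Binomial coefficient with integer lower argument. -/
def ichoose (n : ℕ) (k : ℤ) : ℕ := if 0 ≤ k then n.choose k.toNat else 0

/-- Step pseudo-distribution p_k = δ_{k0} + (-1)^{k-1} c C(2N, k+N) on {-N,...,N}. -/
noncomputable def step (N : ℕ) (c : ℝ) (k : ℤ) : ℝ :=
  if k ∈ Finset.Icc (-(N : ℤ)) (N : ℤ) then
    (if k = 0 then 1 else 0) + (-1 : ℝ) ^ (k - 1) * c * (ichoose (2 * N) (k + N) : ℝ)
  else 0

/-- Pseudo-distribution of S_n (n-fold convolution of the step distribution). -/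
noncomputable def walk (N : ℕ) (c : ℝ) : ℕ → ℤ → ℝ
  | 0, k => if k = 0 then 1 else 0
  | n + 1, k => ∑ j ∈ Finset.Icc (-(N : ℤ)) (N : ℤ), step N c j * walk N c n (k - j)

lemma neg_one_zpow_sub_one (k : ℤ) : (-1 : ℝ) ^ (k - 1) = -(-1) ^ k := by
  rw [zpow_sub_one₀ (by norm_num)]
  simp

lemma tsum_subtype_le_eq_of_eq_sub {α : Type*} [AddCommGroup α] [TopologicalSpace α]
    {f g : ℤ → α} {M : ℤ} (hf : ∀ j, f j = g j - g (j - 1)) (hg : ∀ j < M, g j = 0) (k : ℤ) :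
    ∑' j : {j : ℤ // j ≤ k}, f j = g k := by
  let e : ℕ ≃ {j : ℤ // j ≤ k} :=
    { toFun i := ⟨k - i, by omega⟩
      invFun j := (k - j).toNat
      left_inv i := by simp
      right_inv j := by ext; simp; omega }
  set n := (k - M + 1).toNat
  rw [← e.tsum_eq, tsum_eq_sum (s := range n)]
  · simp only [e, Equiv.coe_fn_mk, hf, sub_sub, ← Nat.cast_succ]
    rw [sum_range_sub' (fun i : ℕ => g (k - i)) n, hg (k - n) (by omega)]
    simp
  · intro i hi
    simp only [mem_range, not_lt] at hi
    simp only [e, Equiv.coe_fn_mk, hf]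
    rw [hg _ (by omega), hg _ (by omega), sub_zero]

lemma sum_Icc_neg_eq_sum_range {M : Type*} [AddCommMonoid M] (f : ℤ → M) (a : ℕ) :
    ∑ j ∈ Icc (-(a : ℤ)) a, f j = ∑ i ∈ range (2 * a + 1), f (i - a) :=
  sum_nbij' (fun j => (j + a).toNat) (fun i => i - a)
    (fun j hj => by simp only [mem_Icc, mem_range] at hj ⊢; omega)
    (fun i hi => by simp only [mem_Icc, mem_range] at hi ⊢; omega)
    (fun j hj => by simp only [mem_Icc] at hj; omega)
    (fun i _ => by omega)
    (fun j hj => by simp only [mem_Icc] at hj; congr 1; omega)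

lemma ichoose_of_neg (a : ℕ) {m : ℤ} (h : m < 0) : ichoose a m = 0 := by
  simp [ichoose, not_le.mpr h]

lemma ichoose_of_lt (a : ℕ) {m : ℤ} (h : a < m) : ichoose a m = 0 := by
  simp [ichoose, Nat.choose_eq_zero_of_lt (by omega : a < m.toNat)]

@[simp]
lemma ichoose_natCast (a i : ℕ) : ichoose a i = a.choose i := by
  simp [ichoose]

lemma ichoose_zero_left (m : ℤ) : ichoose 0 m = if m = 0 then 1 else 0 := by
  rcases lt_trichotomy m 0 with h | rfl | h
  · simp [ichoose_of_neg _ h, h.ne]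
  · simp [ichoose]
  · simp [ichoose_of_lt 0 h, h.ne']

lemma ichoose_succ_left (a : ℕ) (m : ℤ) : ichoose (a + 1) m = ichoose a m + ichoose a (m - 1) := by
  rcases lt_trichotomy m 0 with h | rfl | h
  · simp [ichoose_of_neg _ h, ichoose_of_neg _ (by omega : m - 1 < 0)]
  · simp [ichoose]
  · obtain ⟨t, rfl⟩ : ∃ t : ℕ, m = t + 1 := ⟨(m - 1).toNat, by omega⟩
    rw [add_sub_cancel_right, ← Nat.cast_succ, ichoose_natCast, ichoose_natCast, ichoose_natCast,
      Nat.choose_succ_succ', add_comm]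

lemma sum_range_choose_mul_ichoose (a b : ℕ) (m : ℤ) :
    ∑ i ∈ range (a + 1), a.choose i * ichoose b (m - i) = ichoose (a + b) m := by
  induction a generalizing m with
  | zero => simp
  | succ a ih =>
    have hshift : ∀ i : ℕ, ichoose b (m - ↑(i + 1)) = ichoose b (m - 1 - i) := fun i => by
      push_cast; ring_nf
    have hpascal := sum_choose_succ_mul (R := ℕ) (fun i _ => ichoose b (m - i)) a
    simp only [Nat.cast_id, hshift] at hpascal
    rw [hpascal, ih, ih, add_right_comm a 1 b, ichoose_succ_left]

/-- The coefficient of `T ^ k` in the Laurent polynomial `(2 - T - T⁻¹) ^ m`. -/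
noncomputable def laplacianPowCoeff (m : ℕ) (k : ℤ) : ℝ := (-1) ^ k * ichoose (2 * m) (k + m)

lemma laplacianPowCoeff_zero (k : ℤ) : laplacianPowCoeff 0 k = if k = 0 then 1 else 0 := by
  by_cases h : k = 0 <;> simp [laplacianPowCoeff, ichoose_zero_left, h]

lemma laplacianPowCoeff_eq_sub {m : ℕ} (hm : 0 < m) (k : ℤ) :
    laplacianPowCoeff m k =
      (-1) ^ k * ichoose (2 * m - 1) (k + m) -
        (-1) ^ (k - 1) * ichoose (2 * m - 1) (k - 1 + m) := by
  obtain ⟨a, ha⟩ : ∃ a, 2 * m = a + 1 := ⟨2 * m - 1, by omega⟩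
  rw [laplacianPowCoeff, ha, ichoose_succ_left, Nat.add_sub_cancel, neg_one_zpow_sub_one,
    sub_add_eq_add_sub]
  push_cast
  ring

lemma step_eq_sub_laplacianPowCoeff (N : ℕ) (c : ℝ) (j : ℤ) :
    step N c j = (if j = 0 then 1 else 0) - c * laplacianPowCoeff N j := by
  rw [step, laplacianPowCoeff]
  split_ifs with hj h0 h0
  · rw [neg_one_zpow_sub_one]; ring
  · rw [neg_one_zpow_sub_one]; ring
  · simp [h0] at hj
  · rw [mem_Icc] at hj
    rcases not_and_or.mp hj with h | h
    · simp [ichoose_of_neg _ (by omega : j + N < 0)]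
    · simp [ichoose_of_lt _ (by push_cast; omega : ((2 * N : ℕ) : ℤ) < j + N)]

lemma sum_laplacianPowCoeff_mul (a b : ℕ) (k : ℤ) :
    ∑ j ∈ Icc (-(a : ℤ)) a, laplacianPowCoeff a j * laplacianPowCoeff b (k - j) =
      laplacianPowCoeff (a + b) k := by
  have hterm : ∀ i : ℕ, laplacianPowCoeff a (i - a) * laplacianPowCoeff b (k - (i - a)) =
      (-1) ^ k * ((2 * a).choose i * ichoose (2 * b) (k + ↑(a + b) - i) : ℕ) := fun i => by
    have hsign : (-1 : ℝ) ^ ((i : ℤ) - a) * (-1) ^ (k - (i - a)) = (-1) ^ k := by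
      rw [← zpow_add₀ (by norm_num)]; ring_nf
    rw [laplacianPowCoeff, laplacianPowCoeff, sub_add_cancel, ichoose_natCast, ← hsign,
      show k - (i - a) + b = k + ↑(a + b) - i by push_cast; ring]
    push_cast
    ring
  rw [sum_Icc_neg_eq_sum_range]
  simp only [hterm]
  rw [← mul_sum, ← Nat.cast_sum, sum_range_choose_mul_ichoose, laplacianPowCoeff, Nat.mul_add]

lemma walk_eq_sum_laplacianPowCoeff (N : ℕ) (c : ℝ) (n : ℕ) (k : ℤ) :
    walk N c n k = ∑ ℓ ∈ range (n + 1), (-c) ^ ℓ * n.choose ℓ * laplacianPowCoeff (N * ℓ) k := by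
  induction n generalizing k with
  | zero => simp [walk, laplacianPowCoeff_zero]
  | succ n ih =>
    have hconv : ∑ j ∈ Icc (-(N : ℤ)) N, laplacianPowCoeff N j * walk N c n (k - j) =
        ∑ ℓ ∈ range (n + 1), (-c) ^ ℓ * n.choose ℓ * laplacianPowCoeff (N * (ℓ + 1)) k := by
      simp only [ih, mul_sum]
      rw [sum_comm]
      refine sum_congr rfl fun ℓ _ => ?_
      rw [show N * (ℓ + 1) = N + N * ℓ by ring, ← sum_laplacianPowCoeff_mul, mul_sum]
      exact sum_congr rfl fun j _ => by ring
    have hpascal := sum_choose_succ_mul (R := ℝ)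
      (fun ℓ _ => (-c) ^ ℓ * laplacianPowCoeff (N * ℓ) k) n
    calc walk N c (n + 1) k
        = walk N c n k -
            c * ∑ j ∈ Icc (-(N : ℤ)) N, laplacianPowCoeff N j * walk N c n (k - j) := by
          simp only [walk, step_eq_sub_laplacianPowCoeff, sub_mul, sum_sub_distrib, ite_mul,
            one_mul, zero_mul, sum_ite_eq', mul_sum, mul_assoc]
          simp
      _ = _ := by
          rw [hconv, ih, mul_sum, sub_eq_add_neg, ← sum_neg_distrib]
          convert hpascal.symm using 1
          · congr 1 <;> exact sum_congr rfl fun ℓ _ => by ring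
          · exact sum_congr rfl fun ℓ _ => by ring

noncomputable def walkCDF (N n : ℕ) (c : ℝ) (k : ℤ) : ℝ :=
  (if 0 ≤ k then 1 else 0) +
    (-1) ^ k * ∑ ℓ ∈ Icc 1 n, (-c) ^ ℓ * n.choose ℓ * ichoose (2 * N * ℓ - 1) (k + N * ℓ)

lemma walk_eq_walkCDF_sub {N : ℕ} (hN : 0 < N) (c : ℝ) (n : ℕ) (j : ℤ) :
    walk N c n j = walkCDF N n c j - walkCDF N n c (j - 1) := by
  have hterm : ∀ ℓ ∈ Icc 1 n, (-c) ^ ℓ * n.choose ℓ * laplacianPowCoeff (N * ℓ) j =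
      (-1) ^ j * ((-c) ^ ℓ * n.choose ℓ * ichoose (2 * N * ℓ - 1) (j + N * ℓ)) -
        (-1) ^ (j - 1) * ((-c) ^ ℓ * n.choose ℓ * ichoose (2 * N * ℓ - 1) (j - 1 + N * ℓ)) := by
    intro ℓ hℓ
    rw [laplacianPowCoeff_eq_sub (Nat.mul_pos hN (mem_Icc.mp hℓ).1), ← mul_assoc]
    push_cast
    ring
  have hindicator : (if j = 0 then (1 : ℝ) else 0) =
      (if 0 ≤ j then 1 else 0) - (if 0 ≤ j - 1 then 1 else 0) := by
    split_ifs <;> first | omega | norm_num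
  rw [walk_eq_sum_laplacianPowCoeff, range_eq_Ico, sum_eq_sum_Ico_succ_bot n.succ_pos, zero_add,
    Nat.succ_eq_add_one, Ico_add_one_right_eq_Icc, sum_congr rfl hterm, sum_sub_distrib,
    ← mul_sum, ← mul_sum, mul_zero, laplacianPowCoeff_zero, hindicator, walkCDF, walkCDF]
  simp only [pow_zero, Nat.choose_zero_right, Nat.cast_one, one_mul]
  ring

lemma walkCDF_eq_zero_of_lt (N n : ℕ) (c : ℝ) {j : ℤ} (hj : j < -(N * n : ℕ)) :
    walkCDF N n c j = 0 := by
  rw [walkCDF, if_neg (by omega), sum_eq_zero, mul_zero, add_zero]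
  intro ℓ hℓ
  have : N * ℓ ≤ N * n := Nat.mul_le_mul_left N (mem_Icc.mp hℓ).2
  rw [ichoose_of_neg _ (by push_cast at hj ⊢; omega), Nat.cast_zero, mul_zero]

theorem stmt9_general (N n : ℕ) (hN : 0 < N) (c : ℝ) (k : ℤ) :
    ∑' j : {j : ℤ // j ≤ k}, walk N c n (j : ℤ) =
    (if 0 ≤ k then (1 : ℝ) else 0) +
      (-1 : ℝ) ^ k *
        ∑ ℓ ∈ Finset.Icc 1 n,
          (-c) ^ ℓ * (n.choose ℓ : ℝ) * (ichoose (2 * N * ℓ - 1) (k + (N : ℤ) * ℓ) : ℝ) :=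
  tsum_subtype_le_eq_of_eq_sub (walk_eq_walkCDF_sub hN c n) (fun _ => walkCDF_eq_zero_of_lt N n c) k

/-- P{S_n ≤ k} = 𝟙_{k≥0} + (-1)^k ∑_{ℓ=1}^{n} (-c)^ℓ C(n,ℓ) C(2Nℓ-1, k+Nℓ). -/
theorem stmt9 (N n : ℕ) (hN : 0 < N) (hn : 0 < n) (c : ℝ) (k : ℤ) :
    ∑' j : {j : ℤ // j ≤ k}, walk N c n (j : ℤ) =
    (if 0 ≤ k then (1 : ℝ) else 0) +
      (-1 : ℝ) ^ k *
        ∑ ℓ ∈ Finset.Icc 1 n,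
          (-c) ^ ℓ * (n.choose ℓ : ℝ) * (ichoose (2 * N * ℓ - 1) (k + (N : ℤ) * ℓ) : ℝ) :=
  stmt9_general N n hN c k
end

section
/- Suppose 0 < c ≤ 1/2^{2N-1} and let P{S_n = 0} = (1/2π)∫_0^{2π} (1 - c 4^N sin^{2N}(θ/2))^n dθ. Then for every δ ∈ (0, 1/(2N)), P{S_n = 0} = O(n^{-δ}) as n → ∞. -/
/-!
On `[0, 2π]` write `|θ - π| = r`. Jordan's inequality gives `sin (θ/2) ≥ 1 - r/π` and
`|cos (θ/2)| ≥ r/π`, so away from the three points `0, π, 2π` (at distance `≥ t`) both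
`c 4^N sin^{2N}(θ/2)` and `2 - c 4^N sin^{2N}(θ/2) ≥ 2 cos²(θ/2)` are at least
`c 4^N (t/π)^{2N}`; there `|f θ|^n ≤ exp (-n c 4^N (t/π)^{2N})`, while the excluded set has
length `4t`. Taking `t = n^{-δ}` makes the exponential `exp (-κ n^{1 - 2Nδ})`, which decays
faster than any power of `n` because `2Nδ < 1`.
-/

open Finset MeasureTheory intervalIntegral Asymptotics Filter

/-- The characteristic function f(θ) = 1 - c 4^N sin^{2N}(θ/2). -/
noncomputable def charFn (N : ℕ) (c : ℝ) (θ : ℝ) : ℝ :=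
  1 - c * 4 ^ N * Real.sin (θ / 2) ^ (2 * N)

/-- P{S_n = 0} = (1/2π) ∫_0^{2π} f(θ)^n dθ. -/
noncomputable def Pzero (N : ℕ) (c : ℝ) (n : ℕ) : ℝ :=
  (1 / (2 * Real.pi)) * ∫ θ in (0 : ℝ)..(2 * Real.pi), (charFn N c θ) ^ n

open Real Set

lemma one_sub_abs_sub_pi_div_pi_le_sin_half {θ : ℝ} (h : |θ - π| ≤ π) :
    1 - |θ - π| / π ≤ sin (θ / 2) := by
  have hsin : sin (θ / 2) = cos |(θ - π) / 2| := by
    rw [cos_abs, ← sin_add_pi_div_two]; congr 1; ring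
  have hy : |(θ - π) / 2| = |θ - π| / 2 := by rw [abs_div, abs_two]
  rw [hsin]
  calc 1 - |θ - π| / π = 1 - 2 / π * |(θ - π) / 2| := by rw [hy]; ring
    _ ≤ cos |(θ - π) / 2| := one_sub_mul_le_cos (abs_nonneg _) (by rw [hy]; linarith)

lemma abs_sub_pi_div_pi_le_abs_cos_half {θ : ℝ} (h : |θ - π| ≤ π) :
    |θ - π| / π ≤ |cos (θ / 2)| := by
  have hcos : |cos (θ / 2)| = |sin ((θ - π) / 2)| := by
    rw [show θ / 2 = (θ - π) / 2 + π / 2 by ring, cos_add_pi_div_two, abs_neg]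
  have hy : |(θ - π) / 2| = |θ - π| / 2 := by rw [abs_div, abs_two]
  rw [hcos]
  calc |θ - π| / π = 2 / π * |(θ - π) / 2| := by rw [hy]; ring
    _ ≤ |sin ((θ - π) / 2)| := mul_abs_le_abs_sin (by rw [hy]; linarith)

lemma abs_one_sub_mul_pow_le {a q m : ℝ} {N : ℕ} (hN : 0 < N) (ha : 0 ≤ a) (ha2 : a ≤ 2)
    (hq : 0 ≤ q) (hq1 : q ≤ 1) (hmq : m ≤ q ^ N) (hm1 : m ≤ 1 - q) :
    |1 - a * q ^ N| ≤ 1 - a * m := by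
  have hqN : q ^ N ≤ q := pow_le_of_le_one hq hq1 hN.ne'
  rw [abs_le]
  constructor
  · nlinarith [pow_nonneg hq N]
  · nlinarith

lemma pow_abs_le_exp_neg_mul {x y : ℝ} (h : |y| ≤ 1 - x) (n : ℕ) :
    |y| ^ n ≤ exp (-(n * x)) :=
  calc |y| ^ n ≤ (1 - x) ^ n := pow_le_pow_left₀ (abs_nonneg y) h n
    _ ≤ exp (-x) ^ n :=
        pow_le_pow_left₀ ((abs_nonneg y).trans h) (by linarith [add_one_le_exp (-x)]) n
    _ = exp (-(n * x)) := by rw [← exp_nat_mul]; ring_nf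

lemma mul_four_pow_le_two {N : ℕ} (hN : 0 < N) {c : ℝ} (hc : c ≤ 1 / 2 ^ (2 * N - 1)) :
    c * 4 ^ N ≤ 2 := by
  have h4 : (4 : ℝ) ^ N = 2 ^ (2 * N - 1) * 2 := by
    rw [← pow_succ, Nat.sub_add_cancel (by omega), pow_mul]; norm_num
  calc c * 4 ^ N = c * 2 ^ (2 * N - 1) * 2 := by rw [h4, mul_assoc]
    _ ≤ 1 / 2 ^ (2 * N - 1) * 2 ^ (2 * N - 1) * 2 := by gcongr
    _ = 2 := by field_simp

lemma intervalIntegral_indicator_one_Icc_le {a b l r : ℝ} (hab : a ≤ b) (hlr : l ≤ r) :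
    ∫ x in a..b, (Icc l r).indicator 1 x ≤ r - l := by
  rw [intervalIntegral.integral_of_le hab, integral_indicator_one measurableSet_Icc,
    measureReal_restrict_apply measurableSet_Icc, ← volume_real_Icc_of_le hlr]
  exact measureReal_mono inter_subset_left measure_Icc_lt_top.ne

lemma intervalIntegrable_indicator_one_Icc (a b l r : ℝ) :
    IntervalIntegrable ((Icc l r).indicator (1 : ℝ → ℝ)) volume a b :=
  intervalIntegrable_iff.2 <|
    (intervalIntegrable_iff.1 intervalIntegrable_const).indicator measurableSet_Icc

lemma isLittleO_exp_neg_mul_rpow_natCast {κ γ : ℝ} (hκ : 0 < κ) (hγ : 0 < γ) (δ : ℝ) :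
    (fun n : ℕ => exp (-κ * (n : ℝ) ^ γ)) =o[atTop] fun n : ℕ => (n : ℝ) ^ (-δ) :=
  ((isLittleO_exp_neg_mul_rpow_atTop hκ (-δ / γ)).comp_tendsto
    ((tendsto_rpow_atTop hγ).comp tendsto_natCast_atTop_atTop)).congr_right fun n => by
      simp only [Function.comp_apply, ← rpow_mul n.cast_nonneg, mul_div_cancel₀ _ hγ.ne']

section charFn

variable {N : ℕ} {c : ℝ}

lemma abs_charFn_le (hN : 0 < N) (hc0 : 0 ≤ c) (hc : c * 4 ^ N ≤ 2) {t θ : ℝ} (ht : 0 ≤ t)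
    (htθ : t ≤ |θ - π|) (hθt : |θ - π| ≤ π - t) :
    |charFn N c θ| ≤ 1 - c * 4 ^ N * (t / π) ^ (2 * N) := by
  have htπ : 0 ≤ t / π := div_nonneg ht pi_pos.le
  have hsin : t / π ≤ sin (θ / 2) := by
    refine le_trans ?_ (one_sub_abs_sub_pi_div_pi_le_sin_half (by linarith))
    rw [le_sub_iff_add_le, ← add_div, div_le_one pi_pos]
    linarith
  have hcos : t / π ≤ |cos (θ / 2)| :=
    (div_le_div_of_nonneg_right htθ pi_pos.le).trans
      (abs_sub_pi_div_pi_le_abs_cos_half (by linarith))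
  have htπ1 : t / π ≤ 1 := hsin.trans (sin_le_one _)
  unfold charFn
  rw [pow_mul, pow_mul]
  refine abs_one_sub_mul_pow_le hN (by positivity) hc (sq_nonneg _) (sin_sq_le_one _)
    (pow_le_pow_left₀ (sq_nonneg _) (pow_le_pow_left₀ htπ hsin 2) N) ?_
  calc ((t / π) ^ 2) ^ N ≤ (t / π) ^ 2 :=
        pow_le_of_le_one (sq_nonneg _) (pow_le_one₀ htπ htπ1) hN.ne'
    _ ≤ |cos (θ / 2)| ^ 2 := pow_le_pow_left₀ htπ hcos 2
    _ = 1 - sin (θ / 2) ^ 2 := by rw [sq_abs, cos_sq']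

lemma abs_charFn_pow_le (hN : 0 < N) (hc0 : 0 ≤ c) (hc : c * 4 ^ N ≤ 2) {t θ : ℝ}
    (ht : 0 ≤ t) (hθ : θ ∈ Icc 0 (2 * π)) (n : ℕ) :
    |charFn N c θ| ^ n ≤ exp (-(n * (c * 4 ^ N * (t / π) ^ (2 * N))))
      + (Icc 0 t).indicator 1 θ + (Icc (π - t) (π + t)).indicator 1 θ
      + (Icc (2 * π - t) (2 * π)).indicator 1 θ := by
  have hind : ∀ s : Set ℝ, 0 ≤ s.indicator (1 : ℝ → ℝ) θ := fun s =>
    indicator_nonneg (fun _ _ => zero_le_one) θ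
  have hθπ : |θ - π| ≤ π := by rw [abs_le]; constructor <;> linarith [hθ.1, hθ.2]
  by_cases hgood : t ≤ |θ - π| ∧ |θ - π| ≤ π - t
  · have := pow_abs_le_exp_neg_mul (abs_charFn_le hN hc0 hc ht hgood.1 hgood.2) n
    linarith [hind (Icc 0 t), hind (Icc (π - t) (π + t)), hind (Icc (2 * π - t) (2 * π))]
  · have hle1 : |charFn N c θ| ^ n ≤ 1 := by
      refine pow_le_one₀ (abs_nonneg _) ?_
      simpa [hN.ne'] using
        abs_charFn_le (t := 0) hN hc0 hc le_rfl (abs_nonneg _) (by simpa using hθπ)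
    have hbad : θ ∈ Icc 0 t ∨ θ ∈ Icc (π - t) (π + t) ∨ θ ∈ Icc (2 * π - t) (2 * π) := by
      simp only [Set.mem_Icc, not_and_or, not_le, abs_lt, lt_abs] at hgood hθ ⊢
      rcases hgood with h | h | h
      · exact Or.inr (Or.inl ⟨by linarith [h.1], by linarith [h.2]⟩)
      · exact Or.inr (Or.inr ⟨by linarith, hθ.2⟩)
      · exact Or.inl ⟨hθ.1, by linarith⟩
    have hexp := (exp_pos (-(n * (c * 4 ^ N * (t / π) ^ (2 * N))))).le
    rcases hbad with h | h | h
    all_goals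
      have hone : _ = (1 : ℝ) := indicator_of_mem h (1 : ℝ → ℝ)
      linarith [hind (Icc 0 t), hind (Icc (π - t) (π + t)), hind (Icc (2 * π - t) (2 * π))]

lemma integral_abs_charFn_pow_le (hN : 0 < N) (hc0 : 0 ≤ c) (hc : c * 4 ^ N ≤ 2) {t : ℝ}
    (ht : 0 ≤ t) (n : ℕ) :
    ∫ θ in (0 : ℝ)..(2 * π), |charFn N c θ| ^ n
      ≤ 2 * π * exp (-(n * (c * 4 ^ N * (t / π) ^ (2 * N)))) + 4 * t := by
  have h2π : (0 : ℝ) ≤ 2 * π := by positivity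
  have hi := intervalIntegrable_indicator_one_Icc 0 (2 * π)
  have hmono := intervalIntegral.integral_mono_on h2π
    ((by unfold charFn; fun_prop : Continuous fun θ => |charFn N c θ| ^ n).intervalIntegrable
      0 (2 * π))
    (((intervalIntegrable_const.add (hi 0 t)).add (hi (π - t) (π + t))).add
      (hi (2 * π - t) (2 * π)))
    (fun θ hθ => abs_charFn_pow_le hN hc0 hc ht hθ n)
  rw [intervalIntegral.integral_add ((intervalIntegrable_const.add (hi _ _)).add (hi _ _))
      (hi _ _), intervalIntegral.integral_add (intervalIntegrable_const.add (hi _ _)) (hi _ _),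
    intervalIntegral.integral_add intervalIntegrable_const (hi _ _),
    intervalIntegral.integral_const, smul_eq_mul, sub_zero] at hmono
  linarith [intervalIntegral_indicator_one_Icc_le h2π ht,
    intervalIntegral_indicator_one_Icc_le h2π (by linarith : π - t ≤ π + t),
    intervalIntegral_indicator_one_Icc_le h2π (by linarith : 2 * π - t ≤ 2 * π)]

lemma abs_Pzero_le (hN : 0 < N) (hc0 : 0 ≤ c) (hc : c * 4 ^ N ≤ 2) {t : ℝ} (ht : 0 ≤ t)
    (n : ℕ) :
    |Pzero N c n| ≤ exp (-(n * (c * 4 ^ N * (t / π) ^ (2 * N)))) + 2 / π * t := by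
  have hint : |∫ θ in (0 : ℝ)..(2 * π), charFn N c θ ^ n|
      ≤ ∫ θ in (0 : ℝ)..(2 * π), |charFn N c θ| ^ n := by
    simpa only [abs_pow] using intervalIntegral.abs_integral_le_integral_abs
      (f := fun θ => charFn N c θ ^ n) (by positivity : (0 : ℝ) ≤ 2 * π)
  unfold Pzero
  rw [abs_mul, abs_of_pos (by positivity)]
  calc 1 / (2 * π) * |∫ θ in (0 : ℝ)..(2 * π), charFn N c θ ^ n|
      ≤ 1 / (2 * π) * (2 * π * exp (-(n * (c * 4 ^ N * (t / π) ^ (2 * N)))) + 4 * t) := by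
        gcongr
        exact hint.trans (integral_abs_charFn_pow_le hN hc0 hc ht n)
    _ = _ := by field_simp; ring

end charFn

theorem stmt11_general (N : ℕ) (hN : 0 < N) (c : ℝ) (hc0 : 0 < c)
    (hc : c ≤ 1 / 2 ^ (2 * N - 1)) (δ : ℝ) (hδ : δ < 1 / (2 * N)) :
    (fun n : ℕ => Pzero N c n) =O[atTop] (fun n : ℕ => (n : ℝ) ^ (-δ)) := by
  have hc2 := mul_four_pow_le_two hN hc
  have hexponent : 0 < 1 - 2 * N * δ := by
    rw [lt_div_iff₀ (by positivity)] at hδ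
    linarith
  have hbound : ∀ᶠ n : ℕ in atTop, ‖Pzero N c n‖ ≤
      ‖exp (-(c * 4 ^ N / π ^ (2 * N)) * (n : ℝ) ^ (1 - 2 * N * δ))
        + 2 / π * (n : ℝ) ^ (-δ)‖ := by
    filter_upwards [eventually_gt_atTop 0] with n hn
    have hn' : (0 : ℝ) < n := Nat.cast_pos.2 hn
    have hrate : (n : ℝ) * (c * 4 ^ N * ((n : ℝ) ^ (-δ) / π) ^ (2 * N))
        = c * 4 ^ N / π ^ (2 * N) * (n : ℝ) ^ (1 - 2 * N * δ) := by
      rw [div_pow, ← rpow_mul_natCast hn'.le, sub_eq_add_neg, rpow_add hn', rpow_one]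
      push_cast
      ring_nf
    rw [norm_eq_abs, norm_of_nonneg (by positivity), neg_mul, ← hrate]
    exact abs_Pzero_le hN hc0.le hc2 (by positivity) n
  exact (IsBigO.of_bound' hbound).trans
    ((isLittleO_exp_neg_mul_rpow_natCast (by positivity) hexponent δ).isBigO.add
      ((isBigO_refl _ _).const_mul_left _))

/-- If 0 < c ≤ 1/2^{2N-1} then for every δ ∈ (0, 1/(2N)),
P{S_n = 0} = O(n^{-δ}) as n → ∞. -/
theorem stmt11 (N : ℕ) (hN : 0 < N) (c : ℝ) (hc0 : 0 < c)
    (hc : c ≤ 1 / 2 ^ (2 * N - 1)) (δ : ℝ) (hδ0 : 0 < δ) (hδ : δ < 1 / (2 * N)) :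
    (fun n : ℕ => Pzero N c n) =O[atTop] (fun n : ℕ => (n : ℝ) ^ (-δ)) :=
  stmt11_general N hN c hc0 hc δ hδ
end

section
/- Consider the Vandermonde system ∑_{k=1}^N a_k^ℓ x_k = α_ℓ for 1 ≤ ℓ ≤ N, with a_1, ..., a_N nonzero and pairwise distinct, and with α_ℓ = 0 for 1 ≤ ℓ ≤ N-1. Then its unique solution is x_k = α_N / (a_k · ∏_{j≠k} (a_k - a_j)) for 1 ≤ k ≤ N. -/
open Finset Polynomial

/-
Put `y_k = a_k x_k`, so that `∑_k a_k^m y_k` vanishes for `m < N - 1` and equals `α_N` for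
`m = N - 1`. Pairing `y` with the Lagrange basis polynomial `L_k` of the nodes `a`, which has
degree `N - 1`, picks out `y_k` on the one hand; on the other hand, expanding `L_k` in
monomials shows that the pairing only sees the leading coefficient `1 / ∏_{j ≠ k} (a_k - a_j)`
of `L_k`, times `α_N`.
-/

theorem Polynomial.sum_eval_mul_eq_sum_coeff_mul_sum_pow_mul {R ι : Type*}
    [CommSemiring R] (s : Finset ι) (v y : ι → R) {p : R[X]} {n : ℕ} (hp : p.natDegree < n) :
    ∑ j ∈ s, p.eval (v j) * y j =
      ∑ m ∈ range n, p.coeff m * ∑ j ∈ s, v j ^ m * y j := by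
  simp_rw [eval_eq_sum_range' hp, sum_mul, mul_sum]
  rw [sum_comm]
  refine sum_congr rfl fun m _ => sum_congr rfl fun j _ => ?_
  ring

theorem Lagrange.eq_div_prod_of_sum_pow_mul {F ι : Type*} [Field F] [DecidableEq ι]
    {s : Finset ι} {v y : ι → F} {c : F} (hvs : Set.InjOn v s)
    (hzero : ∀ m < #s - 1, ∑ j ∈ s, v j ^ m * y j = 0)
    (htop : ∑ j ∈ s, v j ^ (#s - 1) * y j = c) {i : ι} (hi : i ∈ s) :
    y i = c / ∏ j ∈ s.erase i, (v i - v j) := by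
  set P := Lagrange.basis s v i
  have hcard : 0 < #s := card_pos.mpr ⟨i, hi⟩
  have hdeg : P.natDegree = #s - 1 := Lagrange.natDegree_basis hvs hi
  calc y i = ∑ j ∈ s, P.eval (v j) * y j := by
        rw [sum_eq_single_of_mem i hi fun j hj hji => ?_, Lagrange.eval_basis_self hvs hi, one_mul]
        rw [Lagrange.eval_basis_of_ne hji.symm hj, zero_mul]
    _ = ∑ m ∈ range #s, P.coeff m * ∑ j ∈ s, v j ^ m * y j :=
        sum_eval_mul_eq_sum_coeff_mul_sum_pow_mul s v y (by omega)
    _ = P.leadingCoeff * c := by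
        rw [sum_eq_single_of_mem (#s - 1) (mem_range.mpr (by omega)) fun m hm hm' => ?_,
          htop, leadingCoeff, hdeg]
        rw [hzero m (by have := mem_range.mp hm; omega), mul_zero]
    _ = c / ∏ j ∈ s.erase i, (v i - v j) := by
        rw [Lagrange.leadingCoeff_basis hvs hi, inv_mul_eq_div]

/-- Solution of a Vandermonde system with vanishing right-hand side except in the
last equation: if ∑_k a_k^ℓ x_k = 0 for 1 ≤ ℓ ≤ N-1 and ∑_k a_k^N x_k = αN, with
the a_k nonzero and pairwise distinct, then x_k = αN / (a_k ∏_{j≠k} (a_k - a_j)). -/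
theorem stmt12 {F : Type*} [Field F] (N : ℕ) (hN : 0 < N) (a x : Fin N → F)
    (ha0 : ∀ k, a k ≠ 0) (hinj : Function.Injective a) (αN : F)
    (hsys : ∀ ℓ : ℕ, 1 ≤ ℓ → ℓ ≤ N - 1 → ∑ k, a k ^ ℓ * x k = 0)
    (hlast : ∑ k, a k ^ N * x k = αN) :
    ∀ k, x k = αN / (a k * ∏ j ∈ Finset.univ.erase k, (a k - a j)) := by
  intro k
  have hshift : ∀ m, ∑ j, a j ^ m * (a j * x j) = ∑ j, a j ^ (m + 1) * x j := fun m =>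
    sum_congr rfl fun j _ => by ring
  have hy : a k * x k = αN / ∏ j ∈ univ.erase k, (a k - a j) := by
    refine Lagrange.eq_div_prod_of_sum_pow_mul (y := fun j => a j * x j) hinj.injOn
      (fun m hm => ?_) ?_ (mem_univ k)
    · rw [hshift]
      exact hsys (m + 1) (by omega) (by simp only [card_univ, Fintype.card_fin] at hm; omega)
    · rw [hshift, card_univ, Fintype.card_fin, Nat.sub_add_cancel hN, hlast]
  rw [mul_comm, div_mul_eq_div_div, ← hy, mul_div_cancel_left₀ _ (ha0 k)]
end

section
/- Let N be a positive integer and c real. The unique real numbers p_1, ..., p_N satisfying ∑_{k=1}^N k^{2ℓ} p_k = 0 for 1 ≤ ℓ ≤ N-1 and ∑_{k=1}^N k^{2N} p_k = (1/2)(-1)^{N-1} c (2N)! are p_k = (-1)^{k-1} c C(2N, k+N). -/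
/-!
The `2N`-th forward difference of `x ↦ x ^ (2ℓ)` at `-N`, namely
`∑ j, (-1) ^ j * C(2N, j) * (j - N) ^ (2ℓ)`, is `0` for `ℓ < N` and `(2N)!` for `ℓ = N`.
The terms `j = N ± k` coincide and equal
`(-1) ^ (N - 1) * k ^ (2ℓ) * (-1) ^ (k - 1) * C(2N, k + N)`, so
`p_k = (-1) ^ (k - 1) * c * C(2N, k + N)` has the prescribed moments. Uniqueness: the moment
system for `k ^ 2 * p_k` is a transposed Vandermonde system in the distinct nodes `k ^ 2`.
-/

open Finset Nat

theorem sum_range_neg_one_pow_mul_choose_mul_add_pow {R : Type*} [CommRing R] {m n : ℕ}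
    (hmn : m ≤ n) (x : R) :
    ∑ j ∈ range (n + 1), (-1 : R) ^ (n - j) * n.choose j * (x + j) ^ m =
      if m = n then (n ! : R) else 0 := by
  have h := fwdDiff_iter_eq_sum_shift (1 : R) (fun r : R ↦ r ^ m) n x
  simp only [nsmul_one, zsmul_eq_mul] at h
  push_cast at h
  rw [← h]
  rcases hmn.lt_or_eq with hlt | rfl
  · simp [fwdDiff_iter_pow_eq_zero_of_lt hlt, hlt.ne]
  · simp [fwdDiff_iter_eq_factorial]

theorem sum_range_two_mul_add_one_eq_add_sum_Icc {M : Type*} [AddCommMonoid M] (G : ℕ → M)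
    (N : ℕ) :
    ∑ j ∈ range (2 * N + 1), G j = G N + ∑ k ∈ Icc 1 N, (G (N - k) + G (N + k)) := by
  induction N generalizing G with
  | zero => simp
  | succ N ih =>
    rw [show 2 * (N + 1) + 1 = 2 * N + 1 + 1 + 1 by ring, sum_range_succ, sum_range_succ', ih,
      sum_Icc_succ_top (by omega)]
    have : ∀ k ∈ Icc 1 N, G (N - k + 1) + G (N + k + 1) = G (N + 1 - k) + G (N + 1 + k) := by
      intro k hk
      rw [show N - k + 1 = N + 1 - k by grind, add_right_comm]
    rw [sum_congr rfl this, Nat.sub_self, show 2 * N + 1 + 1 = N + 1 + (N + 1) by ring]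
    abel

theorem neg_one_pow_sub_eq_neg_one_pow_add {R : Type*} [Monoid R] [HasDistribNeg R] {a b : ℕ}
    (h : b ≤ a) : (-1 : R) ^ (a - b) = (-1) ^ (a + b) := by
  rw [show a + b = a - b + 2 * b by omega, pow_add, pow_mul, neg_one_sq, one_pow, mul_one]

theorem sum_pow_mul_neg_one_pow_mul_choose {N ℓ : ℕ} (hℓ : ℓ ∈ Icc 1 N) :
    ∑ k ∈ Icc 1 N, (k : ℝ) ^ (2 * ℓ) * ((-1) ^ (k - 1) * (2 * N).choose (k + N)) =
      if ℓ = N then 1 / 2 * (-1) ^ (N - 1) * ((2 * N)! : ℝ) else 0 := by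
  obtain ⟨hℓ1, hℓN⟩ := mem_Icc.1 hℓ
  set G : ℕ → ℝ := fun j ↦ (-1) ^ (2 * N - j) * (2 * N).choose j * (-N + j) ^ (2 * ℓ)
  have hcenter : G N = 0 := by simp [G, show 2 * ℓ ≠ 0 by omega]
  have hpair : ∀ k ∈ Icc 1 N, G (N - k) + G (N + k) =
      2 * (-1) ^ (N - 1) * ((k : ℝ) ^ (2 * ℓ) * ((-1) ^ (k - 1) * (2 * N).choose (k + N))) := by
    intro k hk
    obtain ⟨hk1, hkN⟩ := mem_Icc.1 hk
    have hleft : G (N - k) = (-1) ^ (N + k) * (2 * N).choose (k + N) * (k : ℝ) ^ (2 * ℓ) := by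
      rw [← Even.neg_pow (even_two_mul ℓ)]
      simp only [G, Nat.cast_sub hkN, show 2 * N - (N - k) = N + k by omega,
        Nat.choose_symm_of_eq_add (show 2 * N = N - k + (k + N) by omega)]
      ring
    have hright : G (N + k) = (-1) ^ (N + k) * (2 * N).choose (k + N) * (k : ℝ) ^ (2 * ℓ) := by
      simp only [G]
      rw [show 2 * N - (N + k) = N - k by omega, neg_one_pow_sub_eq_neg_one_pow_add hkN,
        add_comm k N]
      push_cast
      ring
    have hsign : (-1 : ℝ) ^ (N + k) = (-1) ^ (N - 1) * (-1) ^ (k - 1) := by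
      rw [← pow_add, show N + k = N - 1 + (k - 1) + 2 * 1 by omega, pow_add, pow_mul, neg_one_sq,
        one_pow, mul_one]
    rw [hleft, hright, hsign]
    ring
  have htotal : ∑ j ∈ range (2 * N + 1), G j = if 2 * ℓ = 2 * N then ((2 * N)! : ℝ) else 0 :=
    sum_range_neg_one_pow_mul_choose_mul_add_pow (by omega) _
  rw [sum_range_two_mul_add_one_eq_add_sum_Icc, hcenter, zero_add, sum_congr rfl hpair,
    ← mul_sum] at htotal
  have hsq : ((-1 : ℝ) ^ (N - 1)) ^ 2 = 1 := by rw [← pow_mul, pow_mul', neg_one_sq, one_pow]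
  split_ifs at htotal with h
  · rw [if_pos (by omega)]
    linear_combination (1 / 2 * (-1) ^ (N - 1) : ℝ) * htotal - _ * hsq
  · rw [if_neg (by omega)]
    linear_combination (1 / 2 * (-1) ^ (N - 1) : ℝ) * htotal - _ * hsq

theorem eq_zero_of_forall_sum_mul_pow_eq_zero {R ι : Type*} [CommRing R] [IsDomain R]
    {s : Finset ι} {f v : ι → R} (hf : Set.InjOn f s)
    (h : ∀ i < #s, ∑ j ∈ s, v j * f j ^ i = 0) : ∀ j ∈ s, v j = 0 := by
  set e := s.equivFin.symm
  have hv := Matrix.eq_zero_of_forall_pow_sum_mul_pow_eq_zero (f := fun a ↦ f (e a))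
    (v := fun a ↦ v (e a)) (fun a b hab ↦ e.injective (Subtype.ext (hf (e a).2 (e b).2 hab)))
    (fun i ↦ by
      rw [← h i i.2, ← sum_coe_sort s]
      exact e.sum_comp (fun j ↦ v j * f j ^ (i : ℕ)))
  intro j hj
  simpa using congrFun hv (e.symm ⟨j, hj⟩)

theorem eqOn_Icc_of_sum_pow_two_mul_mul_eq {N : ℕ} {p q : ℕ → ℝ}
    (h : ∀ ℓ ∈ Icc 1 N,
      ∑ k ∈ Icc 1 N, (k : ℝ) ^ (2 * ℓ) * p k = ∑ k ∈ Icc 1 N, (k : ℝ) ^ (2 * ℓ) * q k) :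
    ∀ k ∈ Icc 1 N, p k = q k := by
  have hinj : Set.InjOn (fun k : ℕ ↦ (k : ℝ) ^ 2) (Icc 1 N) := fun a _ b _ hab ↦
    Nat.pow_left_injective two_ne_zero (by simpa using hab)
  have hzero := eq_zero_of_forall_sum_mul_pow_eq_zero (s := Icc 1 N)
    (v := fun k : ℕ ↦ (k : ℝ) ^ 2 * (p k - q k)) hinj fun i hi ↦ by
      rw [Nat.card_Icc, Nat.add_sub_cancel] at hi
      have := h (i + 1) (mem_Icc.2 ⟨by omega, hi⟩)
      rw [← sub_eq_zero, ← sum_sub_distrib] at this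
      rw [← this]
      exact sum_congr rfl fun k _ ↦ by ring
  intro k hk
  have hk0 : (k : ℝ) ^ 2 ≠ 0 := by have := (mem_Icc.1 hk).1; positivity
  exact sub_eq_zero.1 ((mul_eq_zero.1 (hzero k hk)).resolve_left hk0)

/-- The unique reals p_1,...,p_N with ∑ k^{2ℓ} p_k = 0 for 1 ≤ ℓ ≤ N-1 and
∑ k^{2N} p_k = (1/2)(-1)^{N-1} c (2N)! are p_k = (-1)^{k-1} c C(2N, k+N). -/
theorem stmt13 (N : ℕ) (hN : 0 < N) (c : ℝ) (p : ℕ → ℝ) :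
    ((∀ ℓ : ℕ, 1 ≤ ℓ → ℓ ≤ N - 1 → ∑ k ∈ Finset.Icc 1 N, (k : ℝ) ^ (2 * ℓ) * p k = 0) ∧
      ∑ k ∈ Finset.Icc 1 N, (k : ℝ) ^ (2 * N) * p k =
        (1 / 2) * (-1 : ℝ) ^ (N - 1) * c * ((2 * N)! : ℝ)) ↔
    (∀ k ∈ Finset.Icc 1 N, p k = (-1 : ℝ) ^ (k - 1) * c * ((2 * N).choose (k + N) : ℝ)) := by
  set q : ℕ → ℝ := fun k ↦ (-1) ^ (k - 1) * c * (2 * N).choose (k + N)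
  have hq : ∀ ℓ ∈ Icc 1 N, ∑ k ∈ Icc 1 N, (k : ℝ) ^ (2 * ℓ) * q k =
      if ℓ = N then 1 / 2 * (-1) ^ (N - 1) * c * ((2 * N)! : ℝ) else 0 := fun ℓ hℓ ↦ by
    have := congrArg (c * ·) (sum_pow_mul_neg_one_pow_mul_choose hℓ)
    simp only [mul_sum, mul_ite, mul_zero] at this
    convert this using 2 <;> ring
  constructor
  · rintro ⟨hlow, htop⟩
    refine eqOn_Icc_of_sum_pow_two_mul_mul_eq fun ℓ hℓ ↦ ?_
    rw [hq ℓ hℓ]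
    split_ifs with h
    · rw [h, htop]
    · exact hlow ℓ (mem_Icc.1 hℓ).1 (by have := (mem_Icc.1 hℓ).2; omega)
  · intro hp
    have hpq (ℓ : ℕ) : ∑ k ∈ Icc 1 N, (k : ℝ) ^ (2 * ℓ) * p k =
        ∑ k ∈ Icc 1 N, (k : ℝ) ^ (2 * ℓ) * q k := sum_congr rfl fun k hk ↦ by rw [hp k hk]
    refine ⟨fun ℓ hℓ1 hℓN ↦ ?_, ?_⟩
    · rw [hpq, hq ℓ (mem_Icc.2 ⟨hℓ1, by omega⟩), if_neg (by omega)]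
    · rw [hpq, hq N (mem_Icc.2 ⟨hN, le_rfl⟩), if_pos rfl]
end

section
/- Fix a positive integer N and an integer b ≥ 1. The unique solution (H_b, H_{b+1}, ..., H_{b+N-1}) of the linear system ∑_{ℓ=b+k}^{b+N-1} C(ℓ-b, k) H_ℓ = (-1)^k C(b+k-1, b-1), for 0 ≤ k ≤ N-1, is H_{b+ℓ} = (-1)^ℓ (b/(ℓ+b)) C(N-1, ℓ) C(b+N-1, b) for 0 ≤ ℓ ≤ N-1. -/
/-!
The coefficient matrix `(C(i, k))` is unitriangular, so the system has at most one solution and it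
suffices to check that the claimed `H` solves it. Writing `i = k + j`, the identity
`C(n, i) C(i, k) = C(n, k) C(n - k, j)` reduces the `k`-th equation to the alternating sum
`∑ⱼ (-1)ʲ C(m, j) / (x + j) = m! / (x (x + 1) ⋯ (x + m))`, a partial-fraction identity proved by
induction on `m` through Pascal's rule, here evaluated at `x = b + k`.
-/

open Finset Nat Polynomial

section Field

variable {K : Type*} [Field K]

theorem ascPochhammer_eval_ne_zero {n : ℕ} {x : K} (hx : ∀ j < n, x + j ≠ 0) :
    (ascPochhammer K n).eval x ≠ 0 := by
  induction n with
  | zero => simp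
  | succ n ih =>
    rw [ascPochhammer_succ_eval]
    exact mul_ne_zero (ih fun j hj => hx j (by omega)) (hx n (by omega))

theorem sum_range_choose_mul_neg_one_pow_div (m : ℕ) (x : K) (hx : ∀ j ≤ m, x + j ≠ 0) :
    ∑ j ∈ range (m + 1), (m.choose j : K) * ((-1) ^ j / (x + j)) =
      m ! / (ascPochhammer K (m + 1)).eval x := by
  induction m generalizing x with
  | zero => simp
  | succ m ih =>
    have hx₁ : ∀ j ≤ m, x + 1 + j ≠ 0 := fun j hj => by
      simpa [add_assoc, add_comm (1 : K)] using hx (j + 1) (by omega)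
    have hshift : ∀ j ∈ range (m + 1),
        (m.choose j : K) * ((-1) ^ (j + 1) / (x + (j + 1 : ℕ))) =
          -((m.choose j : K) * ((-1) ^ j / (x + 1 + j))) := by
      intro j _
      push_cast
      ring
    rw [sum_choose_succ_mul (fun j _ => (-1 : K) ^ j / (x + j)), sum_congr rfl hshift,
      sum_neg_distrib, ih x fun j hj => hx j (by omega), ih (x + 1) hx₁]
    have hP : (ascPochhammer K (m + 1)).eval x ≠ 0 :=
      ascPochhammer_eval_ne_zero fun j hj => hx j (by omega)
    have hP₁ : (ascPochhammer K (m + 1)).eval (x + 1) ≠ 0 :=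
      ascPochhammer_eval_ne_zero fun j hj => hx₁ j (by omega)
    have hright : (ascPochhammer K (m + 2)).eval x =
        (ascPochhammer K (m + 1)).eval x * (x + (m + 1 : ℕ)) :=
      ascPochhammer_succ_eval _ _
    have hleft : (ascPochhammer K (m + 2)).eval x = x * (ascPochhammer K (m + 1)).eval (x + 1) := by
      rw [ascPochhammer_succ_left, eval_mul, eval_X, eval_comp, eval_add, eval_X, eval_one]
    rw [eq_div_iff (ascPochhammer_eval_ne_zero fun j hj => hx j (by omega)), add_mul, neg_mul]
    nth_rewrite 1 [hright]
    rw [hleft, Nat.factorial_succ]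
    field_simp
    push_cast
    ring

theorem sum_Icc_choose_mul_overshoot [CharZero K] {b n k : ℕ} (hb : 0 < b) (hk : k ≤ n) :
    ∑ i ∈ Icc k n, (i.choose k : K) *
        ((-1) ^ i * ((b : K) / (i + b)) * n.choose i * (b + n).choose b) =
      (-1) ^ k * (b + k - 1).choose (b - 1) := by
  obtain ⟨m, rfl⟩ := Nat.exists_eq_add_of_le hk
  obtain ⟨c, rfl⟩ := Nat.exists_eq_add_of_lt hb
  simp only [zero_add, Nat.add_sub_cancel, add_right_comm c 1 k]
  have hterm : ∀ j ∈ range (m + 1),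
      ((k + j).choose k : K) *
          ((-1) ^ (k + j) * (((c + 1 : ℕ) : K) / ((k + j : ℕ) + (c + 1 : ℕ))) *
            (k + m).choose (k + j) * (c + 1 + (k + m)).choose (c + 1)) =
        ((-1) ^ k * (k + m).choose k * ((c : K) + 1) * (c + 1 + (k + m)).choose (c + 1)) *
          ((m.choose j : K) * ((-1) ^ j / (((k + c : ℕ) : K) + 1 + j))) := by
    intro j _
    have hchoose := Nat.choose_mul (n := k + m) (k := k + j) (s := k) (Nat.le_add_right k j)
    simp only [Nat.add_sub_cancel_left] at hchoose
    have hchoose' : ((k + m).choose (k + j) : K) * ((k + j).choose k : K) =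
        (k + m).choose k * m.choose j := by
      exact_mod_cast hchoose
    have hden : ((k + j : ℕ) : K) + (c + 1 : ℕ) ≠ 0 := by
      exact_mod_cast (by omega : k + j + (c + 1) ≠ 0)
    have hden' : ((k + c : ℕ) : K) + 1 + j ≠ 0 := by
      exact_mod_cast (by omega : k + c + 1 + j ≠ 0)
    generalize ((c + 1 + (k + m)).choose (c + 1) : K) = B
    rw [pow_add]
    field_simp
    push_cast at hden ⊢
    linear_combination ((c : K) + 1) * B * ((k : K) + c + 1 + j) * hchoose'
  rw [← Ico_add_one_right_eq_Icc, sum_Ico_eq_sum_range, show k + m + 1 - k = m + 1 by omega,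
    sum_congr rfl hterm, ← mul_sum, sum_range_choose_mul_neg_one_pow_div m _
      fun j _ => by exact_mod_cast (by omega : k + c + 1 + j ≠ 0)]
  have hfac := factorial_mul_ascPochhammer K (k + c) (m + 1)
  rw [show k + c + (m + 1) = c + 1 + (k + m) by omega] at hfac
  have hP : (ascPochhammer K (m + 1)).eval (((k + c : ℕ) : K) + 1) ≠ 0 :=
    ascPochhammer_eval_ne_zero fun j _ => by exact_mod_cast (by omega : k + c + 1 + j ≠ 0)
  rw [cast_add_choose, cast_add_choose, cast_add_choose, ← hfac, Nat.factorial_succ c,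
    add_comm c k]
  have hc : (c : K) + 1 ≠ 0 := by exact_mod_cast c.succ_ne_zero
  have hkm : ((k + m)! : K) ≠ 0 := by exact_mod_cast (k + m).factorial_ne_zero
  have hm : (m ! : K) ≠ 0 := by exact_mod_cast m.factorial_ne_zero
  push_cast at hP ⊢
  field_simp

end Field

theorem sum_Icc_unitriangular_eq_iff {R : Type*} [Ring R] {n : ℕ} {a : ℕ → ℕ → R}
    (ha : ∀ k ≤ n, a k k = 1) {r x y : ℕ → R}
    (hy : ∀ k ≤ n, ∑ i ∈ Icc k n, a k i * y i = r k) :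
    (∀ k ≤ n, ∑ i ∈ Icc k n, a k i * x i = r k) ↔ ∀ i ≤ n, x i = y i := by
  constructor
  · intro hx
    refine Nat.strong_decreasing_induction ⟨n, fun m hm hmn => absurd hmn (by omega)⟩ ?_
    intro i ih hi
    have h := (hx i hi).trans (hy i hi).symm
    rw [Icc_eq_cons_Ioc hi, sum_cons, sum_cons, ha i hi, one_mul, one_mul,
      sum_congr rfl fun j hj => by rw [ih j (mem_Ioc.1 hj).1 (mem_Ioc.1 hj).2]] at h
    exact add_right_cancel h
  · intro hxy k hk
    rw [← hy k hk]
    exact sum_congr rfl fun i hi => by rw [hxy i (mem_Icc.1 hi).2]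

/-- The unique solution of ∑_{ℓ=b+k}^{b+N-1} C(ℓ-b, k) H_ℓ = (-1)^k C(b+k-1, b-1),
0 ≤ k ≤ N-1, is H_{b+ℓ} = (-1)^ℓ (b/(ℓ+b)) C(N-1, ℓ) C(b+N-1, b). -/
theorem stmt14 (N b : ℕ) (hN : 0 < N) (hb : 1 ≤ b) (H : ℕ → ℝ) :
    (∀ k ≤ N - 1,
        ∑ ℓ ∈ Finset.Icc (b + k) (b + N - 1), ((ℓ - b).choose k : ℝ) * H ℓ =
        (-1 : ℝ) ^ k * ((b + k - 1).choose (b - 1) : ℝ)) ↔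
    (∀ ℓ ≤ N - 1,
        H (b + ℓ) =
        (-1 : ℝ) ^ ℓ * ((b : ℝ) / ((ℓ : ℝ) + b)) * ((N - 1).choose ℓ : ℝ) *
          ((b + N - 1).choose b : ℝ)) := by
  have htop : b + N - 1 = b + (N - 1) := by omega
  have hshift : ∀ k, ∑ ℓ ∈ Icc (b + k) (b + (N - 1)), ((ℓ - b).choose k : ℝ) * H ℓ =
      ∑ i ∈ Icc k (N - 1), (i.choose k : ℝ) * H (b + i) := by
    intro k
    rw [← map_add_left_Icc, sum_map]
    simp only [addLeftEmbedding_apply, Nat.add_sub_cancel_left]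
  simp only [htop, hshift]
  exact sum_Icc_unitriangular_eq_iff (fun k _ => by simp)
    fun k hk => sum_Icc_choose_mul_overshoot hb hk
end

section
/- Let b, N be positive integers and let μ be the signed measure on {b, b+1, ..., b+N-1} with μ({b+ℓ}) = (-1)^ℓ (b/(ℓ+b)) C(N-1,ℓ) C(b+N-1,b). Then for every integer n with 0 ≤ n ≤ N-1, the factorial moment ∑_{ℓ=0}^{N-1} μ({b+ℓ}) · (ℓ)_n equals (-b)_n = (-1)^n b(b+1)⋯(b+n-1), and for every n ≥ N it equals 0. -/
/-!
The weights are integers in disguise: with `M = N - 1`,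
`μ({b+ℓ}) = C(-b, ℓ) · C(b+M, M-ℓ)`, where `C(-b, ℓ)` is the generalized binomial coefficient.
Since `C(r, ℓ) (ℓ)_n = (r)_n C(r-n, ℓ-n)`, the `n`-th factorial moment is `(-b)_n` times the
Chu–Vandermonde convolution `∑ C(-b-n, i) C(b+M, M-n-i) = C(M-n, M-n) = 1`.
For `n ≥ N` every `(ℓ)_n` with `ℓ < N` vanishes.
-/

open Finset

namespace Ring

variable {R : Type*} [CommRing R] [BinomialRing R]

theorem choose_mul_descFactorial (r : R) {n ℓ : ℕ} (h : n ≤ ℓ) :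
    choose r ℓ * ℓ.descFactorial n = (descPochhammer ℤ n).smeval r * choose (r - n) (ℓ - n) := by
  rw [descPochhammer_eq_factorial_smul_choose, smul_mul_assoc, ← choose_smul_choose r h,
    Nat.descFactorial_eq_factorial_mul_choose, smul_smul, nsmul_eq_mul, Nat.cast_mul]
  ring

theorem sum_choose_mul_descFactorial_mul_choose (r s : R) {n M : ℕ} (hn : n ≤ M) :
    ∑ ℓ ∈ range (M + 1), choose r ℓ * ℓ.descFactorial n * choose s (M - ℓ) =
      (descPochhammer ℤ n).smeval r * choose (r - n + s) (M - n) := by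
  obtain ⟨K, rfl⟩ := Nat.exists_eq_add_of_le hn
  rw [show n + K + 1 = n + (K + 1) by ring, sum_range_add,
    sum_eq_zero fun ℓ hℓ => by simp [Nat.descFactorial_eq_zero_iff_lt.mpr (mem_range.mp hℓ)],
    zero_add, Nat.add_sub_cancel_left, add_choose_eq K (Commute.all _ _),
    Nat.sum_antidiagonal_eq_sum_range_succ (fun i j => choose (r - n) i * choose s j), mul_sum]
  refine sum_congr rfl fun i _ => ?_
  rw [choose_mul_descFactorial r (Nat.le_add_right n i), Nat.add_sub_cancel_left,
    show n + K - (n + i) = K - i by omega, mul_assoc]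

end Ring

theorem Nat.mul_choose_mul_choose_eq_add_mul_choose_mul_choose {b M ℓ : ℕ} (hb : 0 < b)
    (hℓ : ℓ ≤ M) :
    b * (M.choose ℓ * (b + M).choose b) =
      (b + ℓ) * ((b + ℓ - 1).choose ℓ * (b + M).choose (M - ℓ)) := by
  obtain ⟨c, rfl⟩ := Nat.exists_eq_add_one.mpr hb
  have hsymm : (c + 1 + M).choose (M - ℓ) = (c + 1 + M).choose (c + 1 + ℓ) := by
    rw [← Nat.choose_symm (by omega)]; congr 1; omega
  have hmul := Nat.choose_mul (n := c + 1 + M) (k := c + 1 + ℓ) (Nat.le_add_right (c + 1) ℓ)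
  have hsucc := Nat.add_one_mul_choose_eq (c + ℓ) c
  rw [Nat.add_sub_cancel_left, Nat.add_sub_cancel_left] at hmul
  rw [Nat.choose_symm_add] at hsucc
  rw [hsymm, show c + 1 + ℓ - 1 = c + ℓ by omega]
  rw [show c + ℓ + 1 = c + 1 + ℓ by ring] at hsucc
  linear_combination (c + 1 + M).choose (c + 1 + ℓ) * hsucc.symm + (c + 1) * hmul.symm

theorem Int.choose_neg_natCast {b : ℕ} (hb : 0 < b) (ℓ : ℕ) :
    Ring.choose (-(b : ℤ)) ℓ = (-1) ^ ℓ * (b + ℓ - 1).choose ℓ := by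
  rw [Ring.choose_neg, show (b : ℤ) + ℓ - 1 = ((b + ℓ - 1 : ℕ) : ℤ) by omega,
    Ring.choose_natCast, Units.smul_def, Int.coe_negOnePow_natCast, smul_eq_mul]

theorem overshoot_weight_eq {b M ℓ : ℕ} (hb : 0 < b) (hℓ : ℓ ≤ M) :
    (-1 : ℝ) ^ ℓ * ((b : ℝ) / ((ℓ : ℝ) + b)) * (M.choose ℓ : ℝ) * ((b + M).choose b : ℝ) =
      ((Ring.choose (-(b : ℤ)) ℓ * (b + M).choose (M - ℓ) : ℤ) : ℝ) := by
  have h : (b : ℝ) * (M.choose ℓ * (b + M).choose b) =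
      (b + ℓ) * ((b + ℓ - 1).choose ℓ * (b + M).choose (M - ℓ)) := by
    exact_mod_cast Nat.mul_choose_mul_choose_eq_add_mul_choose_mul_choose hb hℓ
  rw [Int.choose_neg_natCast hb]
  push_cast
  have hden : (ℓ : ℝ) + b ≠ 0 := by positivity
  field_simp
  linear_combination h

/-- Factorial moments of the overshoot: with
μ({b+ℓ}) = (-1)^ℓ (b/(ℓ+b)) C(N-1,ℓ) C(b+N-1,b), for 0 ≤ n ≤ N-1 one has
∑_ℓ μ({b+ℓ}) (ℓ)_n = (-b)_n, and for n ≥ N the sum vanishes. -/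
theorem stmt16 (b N : ℕ) (hb : 0 < b) (hN : 0 < N) :
    (∀ n ≤ N - 1,
        ∑ ℓ ∈ Finset.range N,
          ((-1 : ℝ) ^ ℓ * ((b : ℝ) / ((ℓ : ℝ) + b)) * ((N - 1).choose ℓ : ℝ) *
              ((b + N - 1).choose b : ℝ)) * (ℓ.descFactorial n : ℝ) =
        (((descPochhammer ℤ n).eval (-(b : ℤ)) : ℤ) : ℝ)) ∧
    (∀ n ≥ N,
        ∑ ℓ ∈ Finset.range N,
          ((-1 : ℝ) ^ ℓ * ((b : ℝ) / ((ℓ : ℝ) + b)) * ((N - 1).choose ℓ : ℝ) *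
              ((b + N - 1).choose b : ℝ)) * (ℓ.descFactorial n : ℝ) = 0) := by
  obtain ⟨M, rfl⟩ := Nat.exists_eq_add_one.mpr hN
  rw [Nat.add_sub_cancel, ← add_assoc, Nat.add_sub_cancel]
  refine ⟨fun n hn => ?_, fun n hn => sum_eq_zero fun ℓ hℓ => ?_⟩
  · calc _ = ((∑ ℓ ∈ range (M + 1), Ring.choose (-(b : ℤ)) ℓ * ℓ.descFactorial n *
                Ring.choose ((b + M : ℕ) : ℤ) (M - ℓ) : ℤ) : ℝ) := by
          simp only [Ring.choose_natCast]
          push_cast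
          refine sum_congr rfl fun ℓ hℓ => ?_
          rw [overshoot_weight_eq hb (Nat.lt_succ_iff.mp (mem_range.mp hℓ))]
          push_cast
          ring
      _ = _ := by
          rw [Ring.sum_choose_mul_descFactorial_mul_choose _ _ hn,
            show -(b : ℤ) - n + ((b + M : ℕ) : ℤ) = ((M - n : ℕ) : ℤ) by omega,
            Ring.choose_natCast, Nat.choose_self, Nat.cast_one, mul_one,
            Polynomial.eval_eq_smeval]
  · rw [Nat.descFactorial_eq_zero_iff_lt.mpr ((mem_range.mp hℓ).trans_le hn), Nat.cast_zero,
      mul_zero]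
end

section
/- Let b, N be positive integers and μ as above (the pseudo-distribution of S_b^+). Then the factorial pseudo-moments of S_b^+ satisfy: E[(S_b^+)_n] = ∑_{ℓ=0}^{N-1} μ({b+ℓ})(b+ℓ)_n = 0 for 1 ≤ n ≤ N-1 and for n ≥ b+N, while for N ≤ n ≤ b+N-1 it equals (-1)^{N-1} C(n-1, N-1) (b+N-1)_n. In particular E[(S_b^+)^N] = (-1)^{N-1}(b+N-1)!/(b-1)!. -/
/-!
Since `b / (b + ℓ) * (b + ℓ)_n = b * (n - 1)! * C(b - 1 + ℓ, n - 1)` for `n ≥ 1`, every factorial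
pseudo-moment is a multiple of an alternating binomial sum `∑ ℓ, (-1)^ℓ C(N - 1, ℓ) f ℓ`, which is
`(-1)^(N - 1)` times the `(N - 1)`-st forward difference of `f`. The forward differences of
`x ↦ C(x, r)` are again binomial coefficients `C(x, r - (N - 1))`, or zero when `r < N - 1`;
this gives the factorial moments. For the ordinary moment,
`b / (b + ℓ) * (b + ℓ)^N = b * (b + ℓ)^(N - 1)`, and the `(N - 1)`-st difference of
`x ↦ x^(N - 1)` is `(N - 1)!`.
-/

open Finset Nat
open scoped fwdDiff

-- `(Δ_[h])^[m]` needs its parentheses: `]^` is a token of the exterior power notation `⋀[R]^n`.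
theorem alternating_sum_choose_smul_eq_fwdDiff_iter {M G : Type*} [AddCommMonoid M]
    [AddCommGroup G] (h : M) (f : M → G) (m : ℕ) (y : M) :
    ∑ k ∈ range (m + 1), ((-1 : ℤ) ^ k * m.choose k) • f (y + k • h) =
      (-1 : ℤ) ^ m • (Δ_[h])^[m] f y := by
  rw [fwdDiff_iter_eq_sum_shift, smul_sum]
  refine sum_congr rfl fun k hk => ?_
  obtain ⟨j, rfl⟩ := Nat.exists_eq_add_of_le (Nat.lt_succ_iff.mp (mem_range.mp hk))
  rw [smul_smul, Nat.add_sub_cancel_left, pow_add]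
  congr 1
  calc (-1 : ℤ) ^ k * (k + j).choose k
      = (-1) ^ k * ((-1) ^ j * (-1) ^ j) * (k + j).choose k := by
        rw [← mul_pow, neg_one_mul, neg_neg, one_pow, mul_one]
    _ = _ := by ring

theorem fwdDiff_iter_choose_eq_ite (m r c : ℕ) :
    (Δ_[1])^[m] (fun x ↦ x.choose r : ℕ → ℤ) c = if m ≤ r then (c.choose (r - m) : ℤ) else 0 := by
  split_ifs with hmr
  · obtain ⟨j, rfl⟩ := Nat.exists_eq_add_of_le hmr
    rw [fwdDiff_iter_choose, Nat.add_sub_cancel_left]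
  · obtain ⟨j, rfl⟩ := Nat.exists_eq_add_of_lt (not_le.mp hmr)
    have hr : (Δ_[1])^[r] (fun x ↦ x.choose r : ℕ → ℤ) = fun x ↦ x.choose 0 := by
      simpa using fwdDiff_iter_choose 0 r
    rw [show r + j + 1 = j + 1 + r by ring, Function.iterate_add_apply, hr,
      Function.iterate_succ_apply]
    simp [fwdDiff_iter_eq_sum_shift]

theorem alternating_sum_choose_mul_choose_add (m r c : ℕ) :
    ∑ ℓ ∈ range (m + 1), (-1 : ℤ) ^ ℓ * m.choose ℓ * (c + ℓ).choose r =
      (-1) ^ m * if m ≤ r then (c.choose (r - m) : ℤ) else 0 := by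
  rw [← fwdDiff_iter_choose_eq_ite, ← smul_eq_mul, ← alternating_sum_choose_smul_eq_fwdDiff_iter]
  simp

theorem alternating_sum_choose_mul_add_pow {R : Type*} [CommRing R] (m : ℕ) (y : R) :
    ∑ ℓ ∈ range (m + 1), (-1 : R) ^ ℓ * m.choose ℓ * (y + ℓ) ^ m = (-1) ^ m * m ! := by
  have h := alternating_sum_choose_smul_eq_fwdDiff_iter 1 (fun r : R ↦ r ^ m) m y
  rw [fwdDiff_iter_eq_factorial] at h
  simpa [zsmul_eq_mul] using h

theorem mul_choose_mul_factorial_mul_factorial {b N : ℕ} (hb : 0 < b) (hN : 0 < N) :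
    b * (b + N - 1).choose b * (N - 1)! * (b - 1)! = (b + N - 1)! := by
  obtain ⟨a, rfl⟩ := Nat.exists_eq_add_of_lt hb
  obtain ⟨p, rfl⟩ := Nat.exists_eq_add_of_lt hN
  simp only [zero_add, Nat.add_sub_cancel]
  rw [show a + 1 + (p + 1) - 1 = p + (a + 1) by omega, ← add_choose_mul_factorial_mul_factorial,
    factorial_succ]
  ring

theorem mul_choose_mul_factorial_mul_choose {b N n : ℕ} (hN : 0 < N) (hNn : N ≤ n)
    (hnb : n ≤ b + N - 1) :
    b * (b + N - 1).choose b * (n - 1)! * (b - 1).choose (n - N) =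
      (n - 1).choose (N - 1) * (b + N - 1).descFactorial n := by
  have hfac : b * (b + N - 1).choose b * (N - 1)! * (b - 1)! = (b + N - 1)! :=
    mul_choose_mul_factorial_mul_factorial (by omega) hN
  have hb : (b - 1).choose (n - N) * (n - N)! * (b + N - 1 - n)! = (b - 1)! := by
    rw [show b + N - 1 - n = b - 1 - (n - N) by omega]
    exact choose_mul_factorial_mul_factorial (by omega)
  have hn : (n - 1).choose (N - 1) * (N - 1)! * (n - N)! = (n - 1)! := by
    rw [show n - N = n - 1 - (N - 1) by omega]
    exact choose_mul_factorial_mul_factorial (by omega)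
  have hdesc : (b + N - 1 - n)! * (b + N - 1).descFactorial n = (b + N - 1)! :=
    factorial_mul_descFactorial hnb
  apply Nat.eq_of_mul_eq_mul_right (by positivity : 0 < (N - 1)! * (n - N)! * (b + N - 1 - n)!)
  calc b * (b + N - 1).choose b * (n - 1)! * (b - 1).choose (n - N) *
        ((N - 1)! * (n - N)! * (b + N - 1 - n)!)
      = b * (b + N - 1).choose b * (N - 1)! * (n - 1)! *
          ((b - 1).choose (n - N) * (n - N)! * (b + N - 1 - n)!) := by ring
    _ = (b + N - 1)! * (n - 1)! := by rw [hb, ← hfac]; ring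
    _ = (n - 1).choose (N - 1) * (N - 1)! * (n - N)! *
          ((b + N - 1 - n)! * (b + N - 1).descFactorial n) := by rw [hn, hdesc]; ring
    _ = _ := by ring

/-- The mass `μ({b + ℓ})` that the pseudo-distribution of `S_b^+` puts at `b + ℓ`. -/
noncomputable def plusMass (b N ℓ : ℕ) : ℝ :=
  (-1) ^ ℓ * ((b : ℝ) / ((ℓ : ℝ) + b)) * ((N - 1).choose ℓ : ℝ) * ((b + N - 1).choose b : ℝ)

theorem plusMass_mul_descFactorial {b n : ℕ} (N ℓ : ℕ) (hb : 0 < b) (hn : 0 < n) :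
    plusMass b N ℓ * (b + ℓ).descFactorial n =
      (b * (b + N - 1).choose b * (n - 1)! : ℝ) *
        ((-1) ^ ℓ * (N - 1).choose ℓ * (b - 1 + ℓ).choose (n - 1)) := by
  have hdesc : (b + ℓ).descFactorial n = (b + ℓ) * (n - 1)! * (b - 1 + ℓ).choose (n - 1) := by
    rw [show b + ℓ = b - 1 + ℓ + 1 by omega, show n = n - 1 + 1 by omega,
      succ_descFactorial_succ, descFactorial_eq_factorial_mul_choose]
    simp only [Nat.add_sub_cancel, mul_assoc]
  have hpos : (ℓ : ℝ) + b ≠ 0 := by positivity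
  rw [plusMass, hdesc]
  push_cast
  field_simp
  ring

theorem plusMass_mul_pow_succ {b : ℕ} (N ℓ k : ℕ) (hb : 0 < b) :
    plusMass b N ℓ * ((b : ℝ) + ℓ) ^ (k + 1) =
      (b * (b + N - 1).choose b : ℝ) * ((-1) ^ ℓ * (N - 1).choose ℓ * ((b : ℝ) + ℓ) ^ k) := by
  have hpos : (ℓ : ℝ) + b ≠ 0 := by positivity
  rw [plusMass, pow_succ]
  field_simp
  ring

theorem sum_plusMass_mul_descFactorial {b N n : ℕ} (hb : 0 < b) (hN : 0 < N) (hn : 0 < n) :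
    ∑ ℓ ∈ range N, plusMass b N ℓ * (b + ℓ).descFactorial n =
      (-1) ^ (N - 1) * ((b * (b + N - 1).choose b * (n - 1)! : ℝ) *
        if N ≤ n then ((b - 1).choose (n - N) : ℝ) else 0) := by
  have h := congrArg (Int.cast : ℤ → ℝ)
    (alternating_sum_choose_mul_choose_add (N - 1) (n - 1) (b - 1))
  push_cast at h
  rw [show N - 1 + 1 = N by omega, show n - 1 - (N - 1) = n - N by omega] at h
  simp only [plusMass_mul_descFactorial N _ hb hn, ← mul_sum, h,
    show N - 1 ≤ n - 1 ↔ N ≤ n by omega]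
  ring

theorem sum_plusMass_mul_pow {b N : ℕ} (hb : 0 < b) (hN : 0 < N) :
    ∑ ℓ ∈ range N, plusMass b N ℓ * ((b : ℝ) + ℓ) ^ N =
      (-1) ^ (N - 1) * ((b + N - 1)! / (b - 1)! : ℝ) := by
  have hfac : ((b * (b + N - 1).choose b * (N - 1)! * (b - 1)! : ℕ) : ℝ) = (b + N - 1)! :=
    congrArg _ (mul_choose_mul_factorial_mul_factorial hb hN)
  have hsum := alternating_sum_choose_mul_add_pow (N - 1) (b : ℝ)
  rw [Nat.sub_add_cancel hN] at hsum
  have hterm (ℓ : ℕ) : plusMass b N ℓ * ((b : ℝ) + ℓ) ^ N = (b * (b + N - 1).choose b : ℝ) *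
      ((-1) ^ ℓ * (N - 1).choose ℓ * ((b : ℝ) + ℓ) ^ (N - 1)) := by
    rw [← plusMass_mul_pow_succ _ _ _ hb, Nat.sub_add_cancel hN]
  push_cast at hfac
  rw [sum_congr rfl fun ℓ _ => hterm ℓ, ← mul_sum, hsum, ← hfac]
  field_simp

/-- Factorial pseudo-moments of S_b^+: they vanish for 1 ≤ n ≤ N-1 and for n ≥ b+N,
equal (-1)^{N-1} C(n-1, N-1) (b+N-1)_n for N ≤ n ≤ b+N-1, and the N-th pseudo-moment
of S_b^+ equals (-1)^{N-1} (b+N-1)!/(b-1)!. -/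
theorem stmt17 (b N : ℕ) (hb : 0 < b) (hN : 0 < N) :
    (∀ n : ℕ, 1 ≤ n → n ≤ N - 1 →
        ∑ ℓ ∈ Finset.range N,
          ((-1 : ℝ) ^ ℓ * ((b : ℝ) / ((ℓ : ℝ) + b)) * ((N - 1).choose ℓ : ℝ) *
              ((b + N - 1).choose b : ℝ)) * ((b + ℓ).descFactorial n : ℝ) = 0) ∧
    (∀ n : ℕ, b + N ≤ n →
        ∑ ℓ ∈ Finset.range N,
          ((-1 : ℝ) ^ ℓ * ((b : ℝ) / ((ℓ : ℝ) + b)) * ((N - 1).choose ℓ : ℝ) *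
              ((b + N - 1).choose b : ℝ)) * ((b + ℓ).descFactorial n : ℝ) = 0) ∧
    (∀ n : ℕ, N ≤ n → n ≤ b + N - 1 →
        ∑ ℓ ∈ Finset.range N,
          ((-1 : ℝ) ^ ℓ * ((b : ℝ) / ((ℓ : ℝ) + b)) * ((N - 1).choose ℓ : ℝ) *
              ((b + N - 1).choose b : ℝ)) * ((b + ℓ).descFactorial n : ℝ) =
        (-1 : ℝ) ^ (N - 1) * ((n - 1).choose (N - 1) : ℝ) *
          ((b + N - 1).descFactorial n : ℝ)) ∧
    (∑ ℓ ∈ Finset.range N,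
        ((-1 : ℝ) ^ ℓ * ((b : ℝ) / ((ℓ : ℝ) + b)) * ((N - 1).choose ℓ : ℝ) *
            ((b + N - 1).choose b : ℝ)) * ((b + ℓ : ℕ) : ℝ) ^ N =
      (-1 : ℝ) ^ (N - 1) * ((b + N - 1)! : ℝ) / ((b - 1)! : ℝ)) := by
  have hfactorial (n : ℕ) (hn : 0 < n) := sum_plusMass_mul_descFactorial hb hN hn
  have hpow := sum_plusMass_mul_pow hb hN
  simp only [plusMass] at hfactorial hpow
  refine ⟨fun n hn _ => ?_, fun n hn => ?_, fun n hNn hnb => ?_, ?_⟩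
  · rw [hfactorial n hn, if_neg (by omega), mul_zero, mul_zero]
  · rw [hfactorial n (by omega), if_pos (by omega),
      choose_eq_zero_of_lt (n := b - 1) (k := n - N) (by omega)]
    simp
  · have h := congrArg (Nat.cast (R := ℝ)) (mul_choose_mul_factorial_mul_choose hN hNn hnb)
    push_cast at h
    rw [hfactorial n (by omega), if_pos hNn, h, mul_assoc]
  · push_cast
    rw [hpow, mul_div_assoc]
end

section
/- Let b, N be positive integers and for a function f on {b,...,b+N-1} set E[f(S_b^+)] = b C(b+N-1,b) ∑_{ℓ=0}^{N-1} (-1)^ℓ C(N-1,ℓ) f(ℓ+b)/(ℓ+b). Then E[f(S_b^+)] = ∑_{j=0}^{N-1} (-1)^j C(j+b-1, b-1) (Δ⁺)^j f(b), where (Δ⁺)^j f(b) = ∑_{k=0}^{j} (-1)^{j+k} C(j,k) f(b+k) is the j-th iterated forward difference. In particular, taking f(i) = ζ^i gives E[ζ^{S_b^+}] = ζ^b ∑_{j=0}^{N-1} C(j+b-1, b-1)(1-ζ)^j. -/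
/-!
Both sides are linear in `f`. Comparing the coefficients of `f (b + k)` reduces the identity to
`∑_{j<N} C(j+b-1, b-1) C(j, k) = b C(b+N-1, b) C(N-1, k) / (k+b)`, which follows from
`C(j+b', b') C(j, k) = C(b'+k, k) C(j+b', b'+k)` and the hockey-stick identity.
For `f i = ζ ^ i` the binomial theorem gives `(Δ⁺)^j f(b) = ζ^b (ζ-1)^j`.
-/

open Finset

namespace Nat

lemma sum_range_add_choose_of_le {b m : ℕ} (h : b ≤ m) (N : ℕ) :
    ∑ j ∈ range N, (j + b).choose m = (N + b).choose (m + 1) := by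
  induction N with
  | zero => simp [choose_eq_zero_of_lt (show b < m + 1 by omega)]
  | succ n ih =>
    rw [sum_range_succ, ih, show n + 1 + b = n + b + 1 by omega, choose_succ_succ', add_comm]

lemma add_choose_mul_choose (b j k : ℕ) :
    (j + b).choose b * j.choose k = (b + k).choose k * (j + b).choose (b + k) := by
  rcases le_or_gt k j with h | h
  · have hb : j + b - k = (j - k) + b := by omega
    rw [← choose_symm_add, choose_mul h, mul_comm ((b + k).choose k),
      choose_mul (le_add_left k b), Nat.add_sub_cancel, hb, choose_symm_add]
  · rw [choose_eq_zero_of_lt h, choose_eq_zero_of_lt (show j + b < b + k by omega)]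
    simp

lemma sum_range_add_choose_mul_choose (b k N : ℕ) :
    ∑ j ∈ range N, (j + b).choose b * j.choose k =
      (b + k).choose k * (N + b).choose (b + k + 1) := by
  simp_rw [add_choose_mul_choose, ← mul_sum, sum_range_add_choose_of_le (le_add_right b k)]

lemma add_add_one_mul_sum_range_add_choose_mul_choose {b k N : ℕ} (hk : k < N) :
    (k + b + 1) * ∑ j ∈ range N, (j + b).choose b * j.choose k =
      (b + 1) * (N + b).choose (b + 1) * (N - 1).choose k := by
  have hpascal : (k + b + 1) * (b + k).choose k = (b + k + 1).choose (b + 1) * (b + 1) := by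
    rw [← choose_symm_add, ← add_one_mul_choose_eq, add_comm k b]
  have hsplit := choose_mul (n := N + b) (show b + 1 ≤ b + k + 1 by omega)
  rw [show N + b - (b + 1) = N - 1 by omega, show b + k + 1 - (b + 1) = k by omega] at hsplit
  rw [sum_range_add_choose_mul_choose, ← mul_assoc, hpascal, mul_comm, ← mul_assoc, hsplit]
  ring

end Nat

lemma sum_range_succ_choose_mul_eq_sum_range {R : Type*} [Semiring R] {j N : ℕ} (hj : j < N)
    (g : ℕ → R) :
    ∑ k ∈ range (j + 1), (j.choose k : R) * g k = ∑ k ∈ range N, (j.choose k : R) * g k :=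
  sum_subset (range_subset_range.2 (by omega)) fun k _ hk => by
    rw [Nat.choose_eq_zero_of_lt (by simpa using hk), Nat.cast_zero, zero_mul]

section Field

variable {K : Type*} [Field K] [CharZero K]

lemma sum_range_choose_mul_choose_eq_div {b k N : ℕ} (hb : 0 < b) (hk : k < N) :
    ∑ j ∈ range N, ((j + b - 1).choose (b - 1) : K) * j.choose k =
      b * (b + N - 1).choose b * (N - 1).choose k / (k + b) := by
  obtain ⟨b, rfl⟩ : ∃ b', b = b' + 1 := ⟨b - 1, by omega⟩
  have hk0 : (k : K) + (b + 1 : ℕ) ≠ 0 := by exact_mod_cast (show k + (b + 1) ≠ 0 by omega)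
  have key := congrArg (Nat.cast : ℕ → K)
    (Nat.add_add_one_mul_sum_range_add_choose_mul_choose (b := b) hk)
  simp only [← add_assoc, Nat.add_sub_cancel, show b + 1 + N - 1 = N + b by omega]
  rw [eq_div_iff hk0]
  push_cast at key ⊢
  linear_combination key

/-- `E[f(S_b^+)]` for the overshoot pseudo-distribution
`μ {b + ℓ} = (-1)^ℓ (b / (ℓ + b)) C(N-1, ℓ) C(b+N-1, b)`. -/
def overshootExpectation (b N : ℕ) (f : ℕ → K) : K :=
  b * (b + N - 1).choose b *
    ∑ ℓ ∈ range N, (-1) ^ ℓ * ((N - 1).choose ℓ : K) * f (ℓ + b) / ((ℓ : K) + b)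

theorem overshootExpectation_eq_sum_fwdDiff {b : ℕ} (hb : 0 < b) (N : ℕ) (f : ℕ → K) :
    overshootExpectation b N f =
      ∑ j ∈ range N, (-1) ^ j * ((j + b - 1).choose (b - 1) : K) *
        ∑ k ∈ range (j + 1), (-1) ^ (j + k) * (j.choose k : K) * f (b + k) := by
  have hsign (j k : ℕ) : (-1 : K) ^ j * (-1) ^ (j + k) = (-1) ^ k := by
    rw [← pow_add, ← add_assoc, ← two_mul, pow_add, pow_mul, neg_one_sq, one_pow, one_mul]
  symm
  calc _ = ∑ j ∈ range N, ∑ k ∈ range N,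
          (j.choose k : K) * (((j + b - 1).choose (b - 1) : K) * ((-1) ^ k * f (b + k))) := by
        refine sum_congr rfl fun j hj => ?_
        rw [← sum_range_succ_choose_mul_eq_sum_range (mem_range.1 hj), mul_sum]
        refine sum_congr rfl fun k _ => ?_
        linear_combination ((j + b - 1).choose (b - 1) : K) * j.choose k * f (b + k) * hsign j k
    _ = ∑ k ∈ range N, (∑ j ∈ range N, ((j + b - 1).choose (b - 1) : K) * j.choose k) *
          ((-1) ^ k * f (b + k)) := by
        rw [sum_comm]
        refine sum_congr rfl fun k _ => ?_
        rw [sum_mul]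
        refine sum_congr rfl fun j _ => ?_
        ring
    _ = overshootExpectation b N f := by
        rw [overshootExpectation, mul_sum]
        refine sum_congr rfl fun k hk => ?_
        rw [sum_range_choose_mul_choose_eq_div hb (mem_range.1 hk), add_comm b k]
        ring

lemma sum_neg_one_pow_mul_choose_mul_pow {R : Type*} [CommRing R] (b j : ℕ) (ζ : R) :
    ∑ k ∈ range (j + 1), (-1) ^ (j + k) * (j.choose k : R) * ζ ^ (b + k) =
      ζ ^ b * (ζ - 1) ^ j := by
  rw [sub_pow, mul_sum]
  refine sum_congr rfl fun k _ => ?_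
  ring

theorem overshootExpectation_pow {b : ℕ} (hb : 0 < b) (N : ℕ) (ζ : K) :
    overshootExpectation b N (ζ ^ ·) =
      ζ ^ b * ∑ j ∈ range N, ((j + b - 1).choose (b - 1) : K) * (1 - ζ) ^ j := by
  simp_rw [overshootExpectation_eq_sum_fwdDiff hb, sum_neg_one_pow_mul_choose_mul_pow, mul_sum]
  refine sum_congr rfl fun j _ => ?_
  rw [← neg_sub ζ 1, neg_pow (ζ - 1)]
  ring

end Field

theorem stmt18_general (b N : ℕ) (hb : 0 < b) :
    (∀ f : ℕ → ℂ,
        (b : ℂ) * ((b + N - 1).choose b : ℂ) *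
            ∑ ℓ ∈ Finset.range N,
              (-1 : ℂ) ^ ℓ * ((N - 1).choose ℓ : ℂ) * f (ℓ + b) / ((ℓ : ℂ) + b) =
        ∑ j ∈ Finset.range N,
          (-1 : ℂ) ^ j * ((j + b - 1).choose (b - 1) : ℂ) *
            ∑ k ∈ Finset.range (j + 1), (-1 : ℂ) ^ (j + k) * (j.choose k : ℂ) * f (b + k)) ∧
    (∀ ζ : ℂ,
        (b : ℂ) * ((b + N - 1).choose b : ℂ) *
            ∑ ℓ ∈ Finset.range N,
              (-1 : ℂ) ^ ℓ * ((N - 1).choose ℓ : ℂ) * ζ ^ (ℓ + b) / ((ℓ : ℂ) + b) =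
        ζ ^ b * ∑ j ∈ Finset.range N, ((j + b - 1).choose (b - 1) : ℂ) * (1 - ζ) ^ j) :=
  ⟨overshootExpectation_eq_sum_fwdDiff hb N, overshootExpectation_pow hb N⟩

/-- E[f(S_b^+)] = ∑_{j=0}^{N-1} (-1)^j C(j+b-1, b-1) (Δ⁺)^j f(b), and in particular
E[ζ^{S_b^+}] = ζ^b ∑_{j=0}^{N-1} C(j+b-1, b-1)(1-ζ)^j. -/
theorem stmt18 (b N : ℕ) (hb : 0 < b) (hN : 0 < N) :
    (∀ f : ℕ → ℂ,
        (b : ℂ) * ((b + N - 1).choose b : ℂ) *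
            ∑ ℓ ∈ Finset.range N,
              (-1 : ℂ) ^ ℓ * ((N - 1).choose ℓ : ℂ) * f (ℓ + b) / ((ℓ : ℂ) + b) =
        ∑ j ∈ Finset.range N,
          (-1 : ℂ) ^ j * ((j + b - 1).choose (b - 1) : ℂ) *
            ∑ k ∈ Finset.range (j + 1), (-1 : ℂ) ^ (j + k) * (j.choose k : ℂ) * f (b + k)) ∧
    (∀ ζ : ℂ,
        (b : ℂ) * ((b + N - 1).choose b : ℂ) *
            ∑ ℓ ∈ Finset.range N,
              (-1 : ℂ) ^ ℓ * ((N - 1).choose ℓ : ℂ) * ζ ^ (ℓ + b) / ((ℓ : ℂ) + b) =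
        ζ ^ b * ∑ j ∈ Finset.range N, ((j + b - 1).choose (b - 1) : ℂ) * (1 - ζ) ^ j) :=
  stmt18_general b N hb
end

section
/- Let N ≥ 1 and a < 0 < b be integers, and set K = ((-1)^N/N!)·a(a-1)⋯(a-N+1)·b(b+1)⋯(b+N-1) = C(N-a-1,N)·C(N+b-1,N). Define the signed weights on {a-N+1,...,a} ∪ {b,...,b+N-1} by P{S_{ab} = a-ℓ} = (-1)^ℓ (KN/(ℓ-a)) C(N-1,ℓ)/C(ℓ+b-a+N-1, N) and P{S_{ab} = b+ℓ} = (-1)^ℓ (KN/(ℓ+b)) C(N-1,ℓ)/C(ℓ+b-a+N-1, N) for 0 ≤ ℓ ≤ N-1. Then these 2N weights sum to 1, i.e. KN² ∫_0^1∫_0^1 u^{-a-1}(1-u)^{N-1} v^{b-1}(1-v)^{N-1} du dv = 1. -/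
/-!
Write `α = -a - 1`, `β = b - 1`, `n = N - 1` and let `F_m(u) = ∫₀ᵘ tᵐ (1 - t)ⁿ dt` be the incomplete
Beta function. Integrating `(F_α F_β)' = F_α' F_β + F_α F_β'` over `[0, 1]` gives
`F_α(1) F_β(1) = ∫₀¹ F_β' F_α + ∫₀¹ F_α' F_β`. Expanding `(1 - t)ⁿ` binomially, `F_α` is a polynomial,
and `∫₀¹ F_β' F_α` becomes `∑ₗ (-1)ˡ C(n,ℓ) / (α + ℓ + 1) · B(α + β + ℓ + 2, n + 1)`. Since
`1 / C(m + n + 1, n + 1) = (n + 1) B(m + 1, n + 1)`, the two sums are the two families of weights divided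
by `K N²`, while `F_α(1) F_β(1) = B(α + 1, N) B(β + 1, N) = 1 / (K N²)` is also the double integral.
-/

open Finset MeasureTheory intervalIntegral
open scoped Nat

/-- K = C(N-a-1, N) C(N+b-1, N). -/
noncomputable def Kconst (N : ℕ) (a b : ℤ) : ℝ :=
  (((N : ℤ) - a - 1).toNat.choose N : ℝ) * (((N : ℤ) + b - 1).toNat.choose N : ℝ)

noncomputable def incBeta (m n : ℕ) (u : ℝ) : ℝ :=
  ∫ t in (0 : ℝ)..u, t ^ m * (1 - t) ^ n

lemma incBeta_zero (m n : ℕ) : incBeta m n 0 = 0 :=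
  integral_same

lemma intervalIntegrable_pow_mul_one_sub_pow (m n : ℕ) (a b : ℝ) :
    IntervalIntegrable (fun t : ℝ => t ^ m * (1 - t) ^ n) volume a b :=
  (by fun_prop : Continuous fun t : ℝ => t ^ m * (1 - t) ^ n).intervalIntegrable a b

lemma hasDerivAt_incBeta (m n : ℕ) (u : ℝ) :
    HasDerivAt (incBeta m n) (u ^ m * (1 - u) ^ n) u :=
  (Continuous.integral_hasStrictDerivAt (by fun_prop) 0 u).hasDerivAt

lemma incBeta_one_succ_right (m n : ℕ) :
    incBeta m (n + 1) 1 = incBeta m n 1 - incBeta (m + 1) n 1 := by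
  simp only [incBeta]
  rw [← integral_sub (intervalIntegrable_pow_mul_one_sub_pow _ _ _ _)
    (intervalIntegrable_pow_mul_one_sub_pow _ _ _ _)]
  congr 1 with t
  ring

lemma incBeta_one (m n : ℕ) :
    incBeta m n 1 = (m ! * n ! : ℝ) / (m + n + 1)! := by
  induction n generalizing m with
  | zero =>
    simp only [incBeta, pow_zero, mul_one, integral_pow, add_zero, Nat.factorial_succ]
    push_cast
    field_simp
    simp
  | succ n ih =>
    rw [incBeta_one_succ_right, ih, ih, show m + 1 + n + 1 = m + (n + 1) + 1 by ring]
    simp only [Nat.factorial_succ, show m + (n + 1) + 1 = m + n + 1 + 1 by ring]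
    push_cast
    field_simp
    ring

lemma choose_mul_incBeta_one (m n : ℕ) :
    ((m + n + 1).choose (n + 1) : ℝ) * (n + 1) * incBeta m n 1 = 1 := by
  have h := Nat.choose_mul_factorial_mul_factorial (show n + 1 ≤ m + n + 1 by omega)
  rw [show m + n + 1 - (n + 1) = m by omega, Nat.factorial_succ] at h
  have h' : ((m + n + 1).choose (n + 1) : ℝ) * ((n + 1) * n !) * m ! = (m + n + 1)! := by
    exact_mod_cast h
  rw [incBeta_one]
  field_simp
  linear_combination h'

lemma div_choose_eq_mul_incBeta_one (x : ℝ) (m n : ℕ) :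
    x / ((m + n + 1).choose (n + 1) : ℝ) = x * (n + 1) * incBeta m n 1 := by
  rw [div_eq_iff (by exact_mod_cast (Nat.choose_pos (by omega)).ne')]
  linear_combination -x * choose_mul_incBeta_one m n

lemma incBeta_eq_sum (m n : ℕ) (u : ℝ) :
    incBeta m n u = ∑ ℓ ∈ range (n + 1),
      (-1) ^ ℓ * (n.choose ℓ : ℝ) * u ^ (m + ℓ + 1) / (m + ℓ + 1) := by
  have h (t : ℝ) : t ^ m * (1 - t) ^ n
      = ∑ ℓ ∈ range (n + 1), (-1) ^ ℓ * (n.choose ℓ : ℝ) * t ^ (m + ℓ) := by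
    rw [sub_eq_neg_add, add_pow, mul_sum]
    refine sum_congr rfl fun ℓ _ => ?_
    rw [neg_pow, pow_add]
    ring
  simp only [incBeta, h]
  rw [integral_finsetSum fun ℓ _ => ((by fun_prop : Continuous fun t : ℝ => t ^ (m + ℓ))
    |>.intervalIntegrable _ _).const_mul _]
  refine sum_congr rfl fun ℓ _ => ?_
  rw [intervalIntegral.integral_const_mul, integral_pow]
  push_cast
  ring

lemma integral_pow_mul_one_sub_pow_mul_incBeta (m k n : ℕ) :
    ∫ u in (0 : ℝ)..1, u ^ k * (1 - u) ^ n * incBeta m n u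
      = ∑ ℓ ∈ range (n + 1),
          (-1) ^ ℓ * (n.choose ℓ : ℝ) / (m + ℓ + 1) * incBeta (m + k + ℓ + 1) n 1 := by
  have h (u : ℝ) : u ^ k * (1 - u) ^ n * incBeta m n u = ∑ ℓ ∈ range (n + 1),
      (-1) ^ ℓ * (n.choose ℓ : ℝ) / (m + ℓ + 1) * (u ^ (m + k + ℓ + 1) * (1 - u) ^ n) := by
    rw [incBeta_eq_sum, mul_sum]
    refine sum_congr rfl fun ℓ _ => ?_
    rw [show m + k + ℓ + 1 = k + (m + ℓ + 1) by ring, pow_add]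
    ring
  simp only [h]
  rw [integral_finsetSum fun ℓ _ => (intervalIntegrable_pow_mul_one_sub_pow _ _ _ _).const_mul _]
  simp only [intervalIntegral.integral_const_mul, incBeta]

lemma integral_mul_incBeta_add_integral_mul_incBeta (m k n : ℕ) :
    (∫ u in (0 : ℝ)..1, u ^ k * (1 - u) ^ n * incBeta m n u)
      + ∫ u in (0 : ℝ)..1, u ^ m * (1 - u) ^ n * incBeta k n u
      = incBeta m n 1 * incBeta k n 1 := by
  have h := integral_mul_deriv_eq_deriv_mul (a := 0) (b := 1)
    (fun u _ => hasDerivAt_incBeta m n u) (fun u _ => hasDerivAt_incBeta k n u)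
    (intervalIntegrable_pow_mul_one_sub_pow _ _ _ _)
    (intervalIntegrable_pow_mul_one_sub_pow _ _ _ _)
  rw [incBeta_zero, zero_mul, sub_zero] at h
  rw [← eq_sub_iff_add_eq, ← h]
  congr 1 with u
  ring

lemma sum_choose_mul_incBeta (m k n : ℕ) :
    ∑ ℓ ∈ range (n + 1), (-1) ^ ℓ * (n.choose ℓ : ℝ) * (1 / (m + ℓ + 1) + 1 / (k + ℓ + 1))
        * incBeta (m + k + ℓ + 1) n 1
      = incBeta m n 1 * incBeta k n 1 := by
  rw [← integral_mul_incBeta_add_integral_mul_incBeta, integral_pow_mul_one_sub_pow_mul_incBeta,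
    integral_pow_mul_one_sub_pow_mul_incBeta, ← sum_add_distrib]
  refine sum_congr rfl fun ℓ _ => ?_
  rw [add_comm k m]
  ring

lemma integral_integral_pow_mul_one_sub_pow (m k n : ℕ) :
    ∫ u in (0 : ℝ)..1, ∫ v in (0 : ℝ)..1, u ^ m * (1 - u) ^ n * v ^ k * (1 - v) ^ n
      = incBeta m n 1 * incBeta k n 1 := by
  simp only [mul_assoc, intervalIntegral.integral_const_mul]
  simp only [← mul_assoc, intervalIntegral.integral_mul_const, incBeta]

lemma Kconst_mul_incBeta_one_mul_incBeta_one (n α β : ℕ) :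
    Kconst (n + 1) (-(α + 1)) (β + 1) * (n + 1) ^ 2 * (incBeta α n 1 * incBeta β n 1) = 1 := by
  rw [Kconst, show ((n + 1 : ℕ) : ℤ) - -(α + 1) - 1 = ((α + n + 1 : ℕ) : ℤ) by push_cast; ring,
    show ((n + 1 : ℕ) : ℤ) + (β + 1) - 1 = ((β + n + 1 : ℕ) : ℤ) by push_cast; ring,
    Int.toNat_natCast, Int.toNat_natCast]
  linear_combination ((β + n + 1).choose (n + 1) : ℝ) * (n + 1) * incBeta β n 1
      * choose_mul_incBeta_one α n + choose_mul_incBeta_one β n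

/-- The 2N exit pseudo-probabilities of the interval (a,b) sum to 1, i.e.
K N² ∫_0^1 ∫_0^1 u^{-a-1}(1-u)^{N-1} v^{b-1}(1-v)^{N-1} du dv = 1. -/
theorem stmt19 (N : ℕ) (hN : 1 ≤ N) (a b : ℤ) (ha : a < 0) (hb : 0 < b) :
    (∑ ℓ ∈ Finset.range N,
        ((-1 : ℝ) ^ ℓ * (Kconst N a b * N / ((ℓ : ℝ) - (a : ℝ))) * ((N - 1).choose ℓ : ℝ) /
            ((((ℓ : ℤ) + b - a + N - 1).toNat.choose N : ℝ)) +
          (-1 : ℝ) ^ ℓ * (Kconst N a b * N / ((ℓ : ℝ) + (b : ℝ))) * ((N - 1).choose ℓ : ℝ) /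
            ((((ℓ : ℤ) + b - a + N - 1).toNat.choose N : ℝ))) = 1) ∧
    Kconst N a b * N ^ 2 *
        ∫ u in (0 : ℝ)..1, ∫ v in (0 : ℝ)..1,
          u ^ ((-a - 1).toNat) * (1 - u) ^ (N - 1) * v ^ ((b - 1).toNat) * (1 - v) ^ (N - 1) = 1 := by
  obtain ⟨n, rfl⟩ : ∃ n, N = n + 1 := ⟨N - 1, by omega⟩
  obtain ⟨α, rfl⟩ : ∃ α : ℕ, a = -(α + 1) := ⟨(-a - 1).toNat, by omega⟩
  obtain ⟨β, rfl⟩ : ∃ β : ℕ, b = β + 1 := ⟨(b - 1).toNat, by omega⟩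
  have hK := Kconst_mul_incBeta_one_mul_incBeta_one n α β
  refine ⟨?_, ?_⟩
  · rw [← sum_choose_mul_incBeta, mul_sum] at hK
    refine Eq.trans (sum_congr rfl fun ℓ _ => ?_) hK
    rw [show (ℓ : ℤ) + (β + 1) - -(α + 1) + ((n + 1 : ℕ) : ℤ) - 1
        = ((α + β + ℓ + 1 + n + 1 : ℕ) : ℤ) by push_cast; ring,
      Int.toNat_natCast, Nat.add_sub_cancel, div_choose_eq_mul_incBeta_one,
      div_choose_eq_mul_incBeta_one]
    push_cast
    rw [show (ℓ : ℝ) - -(α + 1) = α + ℓ + 1 by ring, show (ℓ : ℝ) + (β + 1) = β + ℓ + 1 by ring]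
    ring
  · have hα : (-(-((α : ℤ) + 1)) - 1).toNat = α := by omega
    have hβ : ((β : ℤ) + 1 - 1).toNat = β := by omega
    rw [hα, hβ, Nat.add_sub_cancel, integral_integral_pow_mul_one_sub_pow]
    exact Eq.trans (by push_cast; ring) hK
end
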